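/- arXiv:1412.3188 — 12 statements merged into one kernel-verified Lean document; each statement's English description precedes it below -/
import Mathlib

section
/- Let s be a sequence of length l·d² over the complex numbers, and let S be the l·d × d array associated with s (so S[q,r] = s[q·d+r]). Suppose (1) any two distinct columns of S are orthogonal under periodic cross-correlation, and (2) for every shift τ ≢ 0 (mod l·d), the sum over all d columns of the periodic autocorrelations at shift τ is zero. Then s is perfect, i.e., all off-peak periodic autocorrelations of s are zero. -/
open Finset Complex

lemma sum_split {M : Type*} [AddCommMonoid M] (a b n : ℕ) (h : n = a * b) (f : ℕ → M) :
    ∑ k ∈ range n, f k = ∑ q ∈ range a, ∑ r ∈ range b, f (q * b + r) := by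
  subst h
  rw [← Finset.sum_product']
  refine Finset.sum_nbij' (fun k => (k / b, k % b)) (fun p => p.1 * b + p.2) ?_ ?_ ?_ ?_ ?_
  · intro k hk
    have hk := Finset.mem_range.mp hk
    have hb : 0 < b := by
      rcases Nat.eq_zero_or_pos b with h | h
      · subst h; simp at hk
      · exact h
    simp only [Finset.mem_product, Finset.mem_range]
    exact ⟨(Nat.div_lt_iff_lt_mul hb).mpr hk, Nat.mod_lt _ hb⟩
  · rintro ⟨q, r⟩ hp
    simp only [Finset.mem_product, Finset.mem_range] at hp
    have hq : q + 1 ≤ a := hp.1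
    refine Finset.mem_range.mpr ?_
    calc q * b + r < q * b + b := by omega
      _ = (q + 1) * b := by ring
      _ ≤ a * b := Nat.mul_le_mul_right b hq
  · intro k _
    exact Nat.div_add_mod' k b
  · rintro ⟨q, r⟩ hp
    simp only [Finset.mem_product, Finset.mem_range] at hp
    have hb : 0 < b := by omega
    have h1 : (q * b + r) / b = q := by
      rw [Nat.add_comm, Nat.add_mul_div_right _ _ hb, Nat.div_eq_of_lt hp.2, Nat.zero_add]
    have h2 : (q * b + r) % b = r := by
      rw [Nat.add_comm, Nat.add_mul_mod_self_right, Nat.mod_eq_of_lt hp.2]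
    simp [h1, h2]
  · intro k _
    rw [Nat.div_add_mod' k b]

lemma cast_mod_mul (l d x r : ℕ) :
    (((x % (l * d)) * d + r : ℕ) : ZMod (l * d ^ 2)) = ((x * d + r : ℕ) : ZMod (l * d ^ 2)) := by
  have h : x * d + r = (x % (l * d)) * d + r + (x / (l * d)) * (l * d ^ 2) := by
    conv_lhs => rw [← Nat.mod_add_div x (l * d)]
    ring
  have hz : ((x / (l * d) * (l * d ^ 2) : ℕ) : ZMod (l * d ^ 2)) = 0 := by
    rw [Nat.cast_mul, ZMod.natCast_self, mul_zero]
  rw [h]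
  conv_rhs => rw [Nat.cast_add, hz, add_zero]

/-- AOP implies perfection (Theorem 3.2): if the `l·d × d` array `S[q,r] = s[q·d+r]`
associated with the length `l·d²` sequence `s` has pairwise orthogonal columns and its
columns form a periodic complementary set, then `s` is perfect. -/
theorem aop_implies_perfect (l d : ℕ) (hl : 0 < l) (hd : 0 < d)
    (s : ZMod (l * d ^ 2) → ℂ)
    (h1 : ∀ τ : ℕ, ∀ j0 j1 : ℕ, j0 < d → j1 < d → j0 ≠ j1 →
      ∑ q ∈ range (l * d), s ((q * d + j0 : ℕ) : ZMod (l * d ^ 2)) *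
        (starRingEnd ℂ) (s ((((q + τ) % (l * d)) * d + j1 : ℕ) : ZMod (l * d ^ 2))) = 0)
    (h2 : ∀ τ : ℕ, ¬ (l * d) ∣ τ →
      ∑ j ∈ range d, ∑ q ∈ range (l * d), s ((q * d + j : ℕ) : ZMod (l * d ^ 2)) *
        (starRingEnd ℂ) (s ((((q + τ) % (l * d)) * d + j : ℕ) : ZMod (l * d ^ 2))) = 0) :
    ∀ τ : ℕ, ¬ (l * d ^ 2) ∣ τ →
      ∑ k ∈ range (l * d ^ 2), s ((k : ℕ) : ZMod (l * d ^ 2)) *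
        (starRingEnd ℂ) (s ((k + τ : ℕ) : ZMod (l * d ^ 2))) = 0 := by
  intro τ hτ
  rw [sum_split (l * d) d (l * d ^ 2) (by ring)]
  rw [Finset.sum_comm]
  obtain ⟨τ₁, τ₀, hτeq, hτ0d⟩ : ∃ a b, τ = d * a + b ∧ b < d :=
    ⟨τ / d, τ % d, (Nat.div_add_mod τ d).symm, Nat.mod_lt _ hd⟩
  by_cases h0 : τ₀ = 0
  · subst h0
    have hτ1 : ¬ (l * d) ∣ τ₁ := by
      rintro ⟨c, rfl⟩
      exact hτ ⟨c, by rw [hτeq]; ring⟩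
    refine Eq.trans ?_ (h2 τ₁ hτ1)
    refine Finset.sum_congr rfl fun j hj => Finset.sum_congr rfl fun q hq => ?_
    have hidx : ((q * d + j + τ : ℕ) : ZMod (l * d ^ 2)) =
        ((((q + τ₁) % (l * d)) * d + j : ℕ) : ZMod (l * d ^ 2)) := by
      rw [cast_mod_mul l d]
      congr 1
      rw [hτeq]; ring
    rw [hidx]
  · refine Finset.sum_eq_zero fun r hr => ?_
    have hrd := Finset.mem_range.mp hr
    obtain ⟨ε, r', hre, hr'd⟩ : ∃ e r', r + τ₀ = d * e + r' ∧ r' < d :=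
      ⟨(r + τ₀) / d, (r + τ₀) % d, (Nat.div_add_mod _ d).symm, Nat.mod_lt _ hd⟩
    have hne : r ≠ r' := by
      intro h
      rcases Nat.eq_zero_or_pos ε with h1 | h1
      · subst h1; omega
      · have h3 : d ≤ d * ε := Nat.le_mul_of_pos_right d h1
        obtain ⟨X, hX⟩ : ∃ X, d * ε = X := ⟨_, rfl⟩
        rw [hX] at hre h3
        omega
    have hcross := h1 (τ₁ + ε) r r' hrd hr'd hne
    refine Eq.trans (Finset.sum_congr rfl fun q hq => ?_) hcross
    have hidx : ((q * d + r + τ : ℕ) : ZMod (l * d ^ 2)) =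
        ((((q + (τ₁ + ε)) % (l * d)) * d + r' : ℕ) : ZMod (l * d ^ 2)) := by
      rw [cast_mod_mul l d]
      congr 1
      subst hτeq
      zify
      zify at hre
      linear_combination hre
    rw [hidx]
end

section
/- The Frank–Heimiller sequence of length n², defined by s_{qn+r} = ω^{qr} for 0 ≤ q,r < n where ω = e^{2πi/n}, is a perfect sequence: for every τ with τ ≢ 0 (mod n²), Σ_{k=0}^{n²-1} s_k · conj(s_{k+τ}) = 0, indices taken mod n². -/
/-!
Write `s_m = ψ((m / n) m)` with `ψ(j) = ω^j` an injective additive character of `ZMod n`; this is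
the `n²`-periodic extension of the sequence, and it satisfies `s_{m + nq} = s_m ψ(qm)`. Splitting
`k = nq + r` with `r < n`, the term `s_k conj(s_{k+τ})` becomes `conj(s_{r+τ}) ψ(-qτ)`, so the sum
over `q` is a geometric sum that vanishes unless `n ∣ τ`. If `τ = na` with `n ∤ a`, the inner sum
is `n` and `conj(s_{r+τ}) = conj(ψ(ar))`, whose sum over `r` vanishes for the same reason.
-/

open Finset Complex ComplexConjugate

theorem Finset.sum_range_mul_eq_sum_sum {M : Type*} [AddCommMonoid M] (f : ℕ → M) (n m : ℕ) :
    ∑ k ∈ range (n * m), f k = ∑ q ∈ range m, ∑ r ∈ range n, f (n * q + r) := by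
  induction m with
  | zero => simp
  | succ m ih => rw [Nat.mul_succ, sum_range_add, ih, sum_range_succ]

namespace AddChar

variable {n : ℕ}

theorem sum_range_map_natCast_mul_eq_zero {K : Type*} [Field K] (ψ : AddChar (ZMod n) K)
    {x : ZMod n} (hx : ψ x ≠ 1) : ∑ q ∈ range n, ψ (q * x) = 0 := by
  simp_rw [← nsmul_eq_mul, map_nsmul_eq_pow]
  rw [geom_sum_eq hx, ← map_nsmul_eq_pow, nsmul_eq_mul, ZMod.natCast_self, zero_mul,
    map_zero_eq_one, sub_self, zero_div]

end AddChar

def frankSeq {n : ℕ} {M : Type*} [Monoid M] (ψ : AddChar (ZMod n) M) (m : ℕ) : M :=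
  ψ (((m / n : ℕ) : ZMod n) * m)

section Monoid

variable {n : ℕ} {M : Type*} [Monoid M] (ψ : AddChar (ZMod n) M)

theorem frankSeq_mod_sq (m : ℕ) : frankSeq ψ (m % n ^ 2) = frankSeq ψ m := by
  rw [frankSeq, frankSeq, sq, Nat.mod_mul_right_div_self, ZMod.natCast_mod,
    ← ZMod.natCast_mod (m % (n * n)), Nat.mod_mul_right_mod, ZMod.natCast_mod]

theorem frankSeq_of_lt {m : ℕ} (hm : m < n) : frankSeq ψ m = 1 := by
  rw [frankSeq, Nat.div_eq_of_lt hm, Nat.cast_zero, zero_mul, AddChar.map_zero_eq_one]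

theorem frankSeq_add_mul (hn : 0 < n) (m j : ℕ) :
    frankSeq ψ (m + n * j) = frankSeq ψ m * ψ (j * m) := by
  rw [frankSeq, frankSeq, Nat.add_mul_div_left _ _ hn, ← AddChar.map_add_eq_mul]
  push_cast
  rw [ZMod.natCast_self, zero_mul, add_zero, add_mul]

end Monoid

section Complex

variable {n : ℕ} [NeZero n]

theorem frankSeq_mul_conj_add_of_lt (ψ : AddChar (ZMod n) ℂ) {r : ℕ} (hr : r < n) (q τ : ℕ) :
    frankSeq ψ (n * q + r) * conj (frankSeq ψ (n * q + r + τ)) =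
      conj (frankSeq ψ (r + τ)) * ψ (q * -τ) := by
  have hn : 0 < n := Nat.pos_of_neZero n
  rw [show n * q + r + τ = r + τ + n * q by ring, add_comm (n * q), frankSeq_add_mul ψ hn,
    frankSeq_add_mul ψ hn, frankSeq_of_lt ψ hr, one_mul, map_mul (starRingEnd ℂ),
    ← AddChar.map_neg_eq_conj, mul_left_comm, ← AddChar.map_add_eq_mul]
  congr 2
  push_cast
  ring

theorem frankSeq_autocorrelation_eq_zero {ψ : AddChar (ZMod n) ℂ} (hψ : Function.Injective ψ)
    {τ : ℕ} (hτ : ¬ n ^ 2 ∣ τ) :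
    ∑ k ∈ range (n ^ 2), frankSeq ψ k * conj (frankSeq ψ (k + τ)) = 0 := by
  have hn : 0 < n := Nat.pos_of_neZero n
  have hψ_ne_one {x : ZMod n} (hx : x ≠ 0) : ψ x ≠ 1 := by
    rw [← AddChar.map_zero_eq_one ψ]; exact hψ.ne hx
  rw [sq, sum_range_mul_eq_sum_sum, sum_comm, sum_congr rfl fun r hr => sum_congr rfl fun q _ =>
    frankSeq_mul_conj_add_of_lt ψ (mem_range.1 hr) q τ]
  simp_rw [← mul_sum]
  by_cases hτn : (τ : ZMod n) = 0
  · obtain ⟨a, rfl⟩ := (ZMod.natCast_eq_zero_iff τ n).1 hτn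
    have ha : (a : ZMod n) ≠ 0 := by
      rw [Ne, ZMod.natCast_eq_zero_iff]
      exact fun h => hτ (sq n ▸ Nat.mul_dvd_mul_left n h)
    calc ∑ r ∈ range n, conj (frankSeq ψ (r + n * a)) * ∑ q ∈ range n, ψ (q * -↑(n * a))
        = conj (∑ r ∈ range n, ψ (r * a)) * n := by
          simp only [hτn, neg_zero, mul_zero, AddChar.map_zero_eq_one, sum_const, card_range,
            nsmul_eq_mul, mul_one, frankSeq_add_mul ψ hn, map_sum, sum_mul]
          refine sum_congr rfl fun r hr => ?_
          rw [frankSeq_of_lt ψ (mem_range.1 hr), one_mul, mul_comm (a : ZMod n)]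
      _ = 0 := by
          rw [AddChar.sum_range_map_natCast_mul_eq_zero ψ (hψ_ne_one ha), map_zero, zero_mul]
  · simp only [AddChar.sum_range_map_natCast_mul_eq_zero ψ (hψ_ne_one (neg_ne_zero.2 hτn)),
      mul_zero, sum_const_zero]

theorem exp_two_pi_I_div_pow_eq_stdAddChar (m : ℕ) :
    exp (2 * Real.pi * I / n) ^ m = ZMod.stdAddChar (m : ZMod n) := by
  rw [ZMod.stdAddChar_apply, ZMod.toCircle_natCast, ← exp_nat_mul]
  ring_nf

theorem exp_two_pi_I_div_pow_eq_frankSeq (m : ℕ) :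
    exp (2 * Real.pi * I / n) ^ (m / n * (m % n) : ℕ) = frankSeq (ZMod.stdAddChar (N := n)) m := by
  rw [exp_two_pi_I_div_pow_eq_stdAddChar, frankSeq, Nat.cast_mul, ZMod.natCast_mod]

end Complex

theorem frank_sequence_perfect_general (n : ℕ) :
    ∀ τ : ℕ, ¬ n ^ 2 ∣ τ →
      ∑ k ∈ range (n ^ 2),
        Complex.exp (2 * Real.pi * Complex.I / n) ^ ((k / n) * (k % n)) *
          (starRingEnd ℂ) (Complex.exp (2 * Real.pi * Complex.I / n) ^
            ((((k + τ) % n ^ 2) / n) * (((k + τ) % n ^ 2) % n))) = 0 := by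
  intro τ hτ
  obtain rfl | hn := n.eq_zero_or_pos
  · simp
  have : NeZero n := NeZero.of_pos hn
  rw [← frankSeq_autocorrelation_eq_zero ZMod.injective_stdAddChar hτ]
  refine sum_congr rfl fun k _ => ?_
  rw [exp_two_pi_I_div_pow_eq_frankSeq, exp_two_pi_I_div_pow_eq_frankSeq, frankSeq_mod_sq]

/-- The Frank–Heimiller sequence `s_{qn+r} = ω^{qr}` of length `n²` is perfect. -/
theorem frank_sequence_perfect (n : ℕ) (hn : 0 < n) :
    ∀ τ : ℕ, ¬ n ^ 2 ∣ τ →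
      ∑ k ∈ range (n ^ 2),
        Complex.exp (2 * Real.pi * Complex.I / n) ^ ((k / n) * (k % n)) *
          (starRingEnd ℂ) (Complex.exp (2 * Real.pi * Complex.I / n) ^
            ((((k + τ) % n ^ 2) / n) * (((k + τ) % n ^ 2) % n))) = 0 :=
  frank_sequence_perfect_general n
end

section
/- Let A be an N-dimensional array of size m_0 × ⋯ × m_{N-1} over ℂ, with each m_k divisible by d, and let A' be the 2N-dimensional array associated with A for divisor d, i.e., A'[q_0,…,q_{N-1},r_0,…,r_{N-1}] = A[q_0 d + r_0, …, q_{N-1} d + r_{N-1}]. Suppose (1) for any two distinct index tuples (r_0,…,r_{N-1}) ≠ (r'_0,…,r'_{N-1}) in {0,…,d-1}^N, the N-dimensional subarrays A'[·,…,·,r_0,…,r_{N-1}] and A'[·,…,·,r'_0,…,r'_{N-1}] have zero periodic cross-correlation at all shifts; and (2) for every off-peak shift, the sum over all d^N subarrays of their periodic autocorrelations is zero. Then A is a perfect array: all off-peak periodic autocorrelations of A vanish. -/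
open Finset Complex

lemma gaop_mod_mul (a b e dd : ℕ) (he : 0 < e) (hb : b < dd) :
    (a * dd + b) % (e * dd) = (a % e) * dd + b := by
  have h1 : a * dd + b = (a % e) * dd + b + (a / e) * (e * dd) := by
    conv_lhs => rw [← Nat.div_add_mod a e]
    ring
  rw [h1, Nat.add_mul_mod_self_right]
  apply Nat.mod_eq_of_lt
  have h2 : a % e + 1 ≤ e := Nat.mod_lt a he
  calc (a % e) * dd + b < (a % e + 1) * dd := by nlinarith
    _ ≤ e * dd := Nat.mul_le_mul_right _ h2

lemma gaop_shift (mk dd q r s : ℕ) (hd : 0 < dd) (hm : 0 < mk) (hdvd : dd ∣ mk)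
    (hr : r < dd) :
    (q * dd + r + s) % mk
      = ((q + (s / dd + (r + s % dd) / dd)) % (mk / dd)) * dd + (r + s % dd) % dd := by
  have he : 0 < mk / dd := Nat.div_pos (Nat.le_of_dvd hm hdvd) hd
  have hmk : mk = (mk / dd) * dd := (Nat.div_mul_cancel hdvd).symm
  have h1 : q * dd + r + s
      = (q + (s / dd + (r + s % dd) / dd)) * dd + (r + s % dd) % dd := by
    have hu : s / dd * dd + s % dd = s := Nat.div_add_mod' s dd
    have hv : (r + s % dd) / dd * dd + (r + s % dd) % dd = r + s % dd :=
      Nat.div_add_mod' _ dd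
    nlinarith [hu, hv]
  conv_lhs => rw [h1, hmk]
  rw [gaop_mod_mul _ _ _ _ he (Nat.mod_lt _ hd)]

lemma gaop_add_mod_ne (dd r u : ℕ) (hr : r < dd) (hu0 : 0 < u) (hud : u < dd) :
    (r + u) % dd ≠ r := by
  rcases Nat.lt_or_ge (r + u) dd with h | h
  · rw [Nat.mod_eq_of_lt h]; omega
  · have h2 : (r + u) % dd = r + u - dd := by
      rw [Nat.mod_eq_sub_mod h, Nat.mod_eq_of_lt (by omega)]
    omega

lemma gaop_reindex {N : ℕ} (dd : ℕ) (hd : 0 < dd) (m : Fin N → ℕ) (hm : ∀ k, 0 < m k)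
    (hdvd : ∀ k, dd ∣ m k) (f : (Fin N → ℕ) → ℂ) :
    ∑ i ∈ Fintype.piFinset (fun k => range (m k)), f i
      = ∑ r ∈ Fintype.piFinset (fun _ : Fin N => range dd),
          ∑ q ∈ Fintype.piFinset (fun k => range (m k / dd)),
            f (fun k => q k * dd + r k) := by
  rw [← Finset.sum_product']
  refine Finset.sum_nbij' (fun i => (fun k => i k % dd, fun k => i k / dd))
    (fun p => fun k => p.2 k * dd + p.1 k) ?_ ?_ ?_ ?_ ?_
  · intro i hi
    simp only [Fintype.mem_piFinset, mem_range] at hi ⊢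
    rw [Finset.mem_product]
    constructor
    · simp only [Fintype.mem_piFinset, mem_range]
      intro k; exact Nat.mod_lt _ hd
    · simp only [Fintype.mem_piFinset, mem_range]
      intro k; exact Nat.div_lt_div_of_lt_of_dvd (hdvd k) (hi k)
  · intro p hp
    rw [Finset.mem_product] at hp
    simp only [Fintype.mem_piFinset, mem_range] at hp ⊢
    intro k
    have h1 := hp.1 k
    have h2 := hp.2 k
    have : p.2 k * dd + p.1 k < (p.2 k + 1) * dd := by nlinarith
    have h3 : (p.2 k + 1) * dd ≤ (m k / dd) * dd := Nat.mul_le_mul_right _ h2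
    rw [Nat.div_mul_cancel (hdvd k)] at h3
    omega
  · intro i hi
    funext k
    exact Nat.div_add_mod' (i k) dd
  · intro p hp
    rw [Finset.mem_product] at hp
    simp only [Fintype.mem_piFinset, mem_range] at hp
    ext k
    · show (p.2 k * dd + p.1 k) % dd = p.1 k
      rw [mul_comm, Nat.mul_add_mod, Nat.mod_eq_of_lt (hp.1 k)]
    · show (p.2 k * dd + p.1 k) / dd = p.2 k
      rw [mul_comm, Nat.mul_add_div hd, Nat.div_eq_of_lt (hp.1 k), Nat.add_zero]
  · intro i hi
    show f i = f (fun k => i k / dd * dd + i k % dd)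
    congr 1
    funext k
    exact (Nat.div_add_mod' (i k) dd).symm

/-- GAOP implies perfection (Theorem 4.4): if the `2N`-dimensional array
`A'[q,r] = A[q·d + r]` associated with an `N`-dimensional array `A` has pairwise
orthogonal `N`-dimensional subarrays and the subarrays form a periodic complementary
set at off-peak shifts, then `A` is perfect. -/
theorem gaop_implies_perfect (N d : ℕ) (hd : 0 < d) (m : Fin N → ℕ)
    (hm : ∀ k, 0 < m k) (hdvd : ∀ k, d ∣ m k) (A : (Fin N → ℕ) → ℂ)
    (h1 : ∀ r r' : Fin N → ℕ, (∀ k, r k < d) → (∀ k, r' k < d) → r ≠ r' →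
      ∀ s : Fin N → ℕ,
        ∑ q ∈ Fintype.piFinset (fun k => range (m k / d)),
          A (fun k => q k * d + r k) *
            (starRingEnd ℂ) (A (fun k => ((q k + s k) % (m k / d)) * d + r' k)) = 0)
    (h2 : ∀ s : Fin N → ℕ, (¬ ∀ k, (m k / d) ∣ s k) →
      ∑ r ∈ Fintype.piFinset (fun _ : Fin N => range d),
        ∑ q ∈ Fintype.piFinset (fun k => range (m k / d)),
          A (fun k => q k * d + r k) *
            (starRingEnd ℂ) (A (fun k => ((q k + s k) % (m k / d)) * d + r k)) = 0) :
    ∀ s : Fin N → ℕ, (¬ ∀ k, m k ∣ s k) →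
      ∑ i ∈ Fintype.piFinset (fun k => range (m k)),
        A i * (starRingEnd ℂ) (A (fun k => (i k + s k) % m k)) = 0 := by
  intro s hs
  rw [gaop_reindex d hd m hm hdvd
    (fun i => A i * (starRingEnd ℂ) (A (fun k => (i k + s k) % m k)))]
  by_cases hc : ∀ k, d ∣ s k
  · -- all shifts divisible by d
    have hσ : ¬ ∀ k, (m k / d) ∣ s k / d := by
      intro h; apply hs; intro k
      obtain ⟨w, hw⟩ := h k
      refine ⟨w, ?_⟩
      have h3 : d * (s k / d) = s k := Nat.mul_div_cancel' (hc k)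
      have h4 : (m k / d) * d = m k := Nat.div_mul_cancel (hdvd k)
      calc s k = d * (s k / d) := h3.symm
        _ = d * ((m k / d) * w) := by rw [hw]
        _ = ((m k / d) * d) * w := by ring
        _ = m k * w := by rw [h4]
    have key := h2 (fun k => s k / d) hσ
    rw [← key]
    refine Finset.sum_congr rfl fun r hr => Finset.sum_congr rfl fun q hq => ?_
    simp only [Fintype.mem_piFinset, mem_range] at hr hq
    have harg : (fun k => (q k * d + r k + s k) % m k)
        = (fun k => ((q k + s k / d) % (m k / d)) * d + r k) := by
      funext k
      have h5 := gaop_shift (m k) d (q k) (r k) (s k) hd (hm k) (hdvd k) (hr k)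
      have hz : s k % d = 0 := Nat.mod_eq_zero_of_dvd (hc k)
      rw [h5, hz, Nat.add_zero, Nat.div_eq_of_lt (hr k), Nat.add_zero,
        Nat.mod_eq_of_lt (hr k)]
    simp only [harg]
  · -- some shift not divisible by d
    push_neg at hc
    obtain ⟨k0, hk0⟩ := hc
    refine Finset.sum_eq_zero fun r hr => ?_
    simp only [Fintype.mem_piFinset, mem_range] at hr
    have key := h1 r (fun k => (r k + s k % d) % d) hr
      (fun k => Nat.mod_lt _ hd)
      (by
        intro h
        apply hk0
        have := congrFun h k0
        have hlt : s k0 % d < d := Nat.mod_lt _ hd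
        by_contra hne
        have h0 : 0 < s k0 % d := Nat.pos_of_ne_zero fun h0 => hk0 (Nat.dvd_of_mod_eq_zero h0)
        exact gaop_add_mod_ne d (r k0) (s k0 % d) (hr k0) h0 hlt this.symm)
      (fun k => s k / d + (r k + s k % d) / d)
    rw [← key]
    refine Finset.sum_congr rfl fun q hq => ?_
    simp only [Fintype.mem_piFinset, mem_range] at hq
    have harg : (fun k => (q k * d + r k + s k) % m k)
        = (fun k => ((q k + (s k / d + (r k + s k % d) / d)) % (m k / d)) * d
            + (r k + s k % d) % d) := by
      funext k
      exact gaop_shift (m k) d (q k) (r k) (s k) hd (hm k) (hdvd k) (hr k)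
    simp only [harg]
end

section
/- For the 2m-dimensional array S' of size d×⋯×d (2m factors) defined by S'[i_0,…,i_{2m-1}] = ω^{∏_{n=m}^{2m-1} i_n + Σ_{n=0}^{m-1} i_n i_{n+m}}, where ω = e^{2πi/d}, any two distinct m-dimensional subarrays obtained by fixing the last m coordinates are orthogonal: if (i_m,…,i_{2m-1}) ≠ (i'_m,…,i'_{2m-1}) in {0,…,d-1}^m, then for all shifts (s_0,…,s_{m-1}), Σ_{i_0,…,i_{m-1}=0}^{d-1} S'[i_0,…,i_{m-1},i_m,…,i_{2m-1}] · conj(S'[i_0+s_0,…,i_{m-1}+s_{m-1},i'_m,…,i'_{2m-1}]) = 0, with indices mod d. -/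
open Finset Complex

/-- Condition 1 of the GAOP for Construction I: any two distinct `m`-dimensional
subarrays (obtained by fixing the last `m` coordinates) of the `2m`-dimensional array
`S'[i] = ω^{∏_{n=m}^{2m-1} i_n + Σ_{n=0}^{m-1} i_n i_{n+m}}` are orthogonal. -/
theorem constructionI_subarrays_orthogonal (m d : ℕ) (hd : 0 < d)
    (j j' : Fin m → ℕ) (hj : ∀ n, j n < d) (hj' : ∀ n, j' n < d) (hne : j ≠ j')
    (s : Fin m → ℕ) :
    ∑ i ∈ Fintype.piFinset (fun _ : Fin m => range d),
      Complex.exp (2 * Real.pi * Complex.I / d) ^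
          ((∏ n : Fin m, j n) + ∑ n : Fin m, i n * j n) *
        (starRingEnd ℂ) (Complex.exp (2 * Real.pi * Complex.I / d) ^
          ((∏ n : Fin m, j' n) + ∑ n : Fin m, ((i n + s n) % d) * j' n)) = 0 := by
  set ω : ℂ := Complex.exp (2 * Real.pi * Complex.I / d) with hωdef
  have hprim : IsPrimitiveRoot ω d := Complex.isPrimitiveRoot_exp d hd.ne'
  have hω1 : ω ^ d = 1 := hprim.pow_eq_one
  have hω0 : ω ≠ 0 := Complex.exp_ne_zero _
  have hconj : (starRingEnd ℂ) ω = ω⁻¹ := by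
    rw [hωdef, ← Complex.exp_conj, ← Complex.exp_neg]
    congr 1
    simp only [map_div₀, map_mul, Complex.conj_I, Complex.conj_ofReal, map_ofNat,
      Complex.conj_natCast]
    ring
  have hmod : ∀ x : ℕ, ω ^ (x % d) = ω ^ x := by
    intro x
    conv_rhs => rw [← Nat.div_add_mod x d]
    rw [pow_add, pow_mul, hω1, one_pow, one_mul]
  -- rewrite each summand as a constant times a product over coordinates
  have key : ∀ i : Fin m → ℕ,
      ω ^ ((∏ n : Fin m, j n) + ∑ n : Fin m, i n * j n) *
        (starRingEnd ℂ) (ω ^ ((∏ n : Fin m, j' n) + ∑ n : Fin m, ((i n + s n) % d) * j' n))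
      = (ω ^ (∏ n : Fin m, j n) * (ω ^ (∏ n : Fin m, j' n))⁻¹) *
        ∏ n : Fin m, (ω ^ (i n * j n) * (ω ^ ((i n + s n) * j' n))⁻¹) := by
    intro i
    rw [map_pow, hconj, inv_pow]
    rw [pow_add, pow_add, ← Finset.prod_pow_eq_pow_sum, ← Finset.prod_pow_eq_pow_sum]
    have h2 : ∀ n : Fin m, ω ^ (((i n + s n) % d) * j' n) = ω ^ ((i n + s n) * j' n) := by
      intro n
      rw [pow_mul, pow_mul, hmod]
    rw [Finset.prod_congr rfl fun n _ => h2 n]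
    rw [Finset.prod_mul_distrib, mul_inv, ← Finset.prod_inv_distrib]
    ring
  rw [Finset.sum_congr rfl fun i _ => key i, ← Finset.mul_sum,
    ← Finset.prod_univ_sum (fun _ : Fin m => range d)
      (fun n x => ω ^ (x * j n) * (ω ^ ((x + s n) * j' n))⁻¹)]
  obtain ⟨n0, hn0⟩ := Function.ne_iff.mp hne
  have hz : (∑ x ∈ range d, ω ^ (x * j n0) * (ω ^ ((x + s n0) * j' n0))⁻¹) = 0 := by
    have hterm : ∀ x : ℕ, ω ^ (x * j n0) * (ω ^ ((x + s n0) * j' n0))⁻¹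
        = (ω ^ j n0 * (ω ^ j' n0)⁻¹) ^ x * (ω ^ (s n0 * j' n0))⁻¹ := by
      intro x
      rw [add_mul, pow_add, mul_inv, mul_pow, inv_pow, ← pow_mul, ← pow_mul,
        mul_comm (j n0) x, mul_comm (j' n0) x]
      ring
    rw [Finset.sum_congr rfl fun x _ => hterm x, ← Finset.sum_mul]
    have hζ1 : ω ^ j n0 * (ω ^ j' n0)⁻¹ ≠ 1 := by
      intro h
      apply hn0
      apply hprim.pow_inj (hj n0) (hj' n0)
      field_simp at h
      exact h
    have hζd : (ω ^ j n0 * (ω ^ j' n0)⁻¹) ^ d = 1 := by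
      rw [mul_pow, inv_pow, ← pow_mul, ← pow_mul, mul_comm (j n0) d, mul_comm (j' n0) d,
        pow_mul, pow_mul, hω1, one_pow, one_pow]
      simp
    rw [geom_sum_eq hζ1, hζd]
    simp
  exact mul_eq_zero_of_right _ (Finset.prod_eq_zero (Finset.mem_univ n0) hz)
end

section
/- For the 2m-dimensional array S'[i_0,…,i_{2m-1}] = ω^{∏_{n=m}^{2m-1} i_n + Σ_{n=0}^{m-1} i_n i_{n+m}} of size d×⋯×d with ω = e^{2πi/d}, the m-dimensional subarrays indexed by the last m coordinates form a periodic complementary set: for any shift (s_0,…,s_{m-1}) with not all s_n ≡ 0 mod d, Σ_{i_0,…,i_{2m-1}=0}^{d-1} S'[i_0,…,i_{2m-1}] · conj(S'[i_0+s_0,…,i_{m-1}+s_{m-1},i_m,…,i_{2m-1}]) = 0. -/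
open Finset Complex

private lemma pow_congr_zmod {ω : ℂ} {d : ℕ} (h : ω ^ d = 1) {a b : ℕ}
    (hab : (a : ZMod d) = (b : ZMod d)) : ω ^ a = ω ^ b := by
  rw [pow_eq_pow_mod a h, pow_eq_pow_mod b h]
  congr 1
  exact (ZMod.natCast_eq_natCast_iff a b d).mp hab

/-- Condition 2 of the GAOP for Construction I: the `m`-dimensional subarrays of
`S'[i] = ω^{∏_{n=m}^{2m-1} i_n + Σ_{n=0}^{m-1} i_n i_{n+m}}` indexed by the last `m`
coordinates form a periodic complementary set. -/
theorem constructionI_subarrays_complementary (m d : ℕ) (hd : 0 < d)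
    (s : Fin m → ℕ) (hs : ¬ ∀ n, d ∣ s n) :
    ∑ i ∈ Fintype.piFinset (fun _ : Fin m => range d),
      ∑ j ∈ Fintype.piFinset (fun _ : Fin m => range d),
        Complex.exp (2 * Real.pi * Complex.I / d) ^
            ((∏ n : Fin m, j n) + ∑ n : Fin m, i n * j n) *
          (starRingEnd ℂ) (Complex.exp (2 * Real.pi * Complex.I / d) ^
            ((∏ n : Fin m, j n) + ∑ n : Fin m, ((i n + s n) % d) * j n)) = 0 := by
  obtain ⟨n₀, hn₀⟩ := not_forall.mp hs
  set ω : ℂ := Complex.exp (2 * Real.pi * Complex.I / d) with hωdef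
  have hdC : (d : ℂ) ≠ 0 := Nat.cast_ne_zero.mpr hd.ne'
  have hω1 : ω ^ d = 1 := by
    rw [hωdef, ← Complex.exp_nat_mul,
      show (d : ℂ) * (2 * Real.pi * Complex.I / d) = 2 * Real.pi * Complex.I by
        field_simp]
    exact Complex.exp_two_pi_mul_I
  have hprim : IsPrimitiveRoot ω d := Complex.isPrimitiveRoot_exp d hd.ne'
  have hcj : (starRingEnd ℂ) ω = ω⁻¹ := by
    rw [hωdef, ← Complex.exp_conj, ← Complex.exp_neg]
    congr 1
    simp only [map_div₀, map_mul, Complex.conj_I, Complex.conj_ofReal, map_natCast, map_ofNat]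
    ring
  have hinv : ω⁻¹ = ω ^ (d - 1) := by
    symm
    apply eq_inv_of_mul_eq_one_left
    rw [← pow_succ, Nat.sub_add_cancel hd]
    exact hω1
  set t : Fin m → ℕ := fun n => (d - s n % d) % d with ht
  have hts : ∀ n, ((t n : ℕ) : ZMod d) = -(s n : ZMod d) := by
    intro n
    have h1 : s n % d ≤ d := (Nat.mod_lt _ hd).le
    rw [ht]
    push_cast [ZMod.natCast_mod, Nat.cast_sub h1, ZMod.natCast_self]
    ring
  have key : ∀ i j : Fin m → ℕ,
      ω ^ ((∏ n, j n) + ∑ n, i n * j n) *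
        (starRingEnd ℂ) (ω ^ ((∏ n, j n) + ∑ n, ((i n + s n) % d) * j n))
      = ∏ n, ω ^ (t n * j n) := by
    intro i j
    rw [map_pow, hcj, hinv, ← pow_mul, ← pow_add, Finset.prod_pow_eq_pow_sum]
    apply pow_congr_zmod hω1
    push_cast [ZMod.natCast_mod, Nat.cast_sub hd, ZMod.natCast_self]
    simp only [hts]
    have hS : (∑ n, (i n : ZMod d) * j n) - (∑ n, ((i n : ZMod d) + s n) * j n)
        = ∑ n, -(s n : ZMod d) * (j n : ZMod d) := by
      rw [← Finset.sum_sub_distrib]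
      exact Finset.sum_congr rfl fun n _ => by ring
    linear_combination hS
  have hzero : ∑ k ∈ range d, ω ^ (t n₀ * k) = 0 := by
    have hmod : s n₀ % d ≠ 0 := fun h => hn₀ (Nat.dvd_of_mod_eq_zero h)
    have hlt : s n₀ % d < d := Nat.mod_lt _ hd
    have ht1 : t n₀ = d - s n₀ % d := by
      rw [ht]
      exact Nat.mod_eq_of_lt (by omega)
    have hne : ω ^ t n₀ ≠ 1 :=
      hprim.pow_ne_one_of_pos_of_lt (by omega) (by omega)
    calc ∑ k ∈ range d, ω ^ (t n₀ * k) = ∑ k ∈ range d, (ω ^ t n₀) ^ k := by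
          simp [pow_mul]
      _ = ((ω ^ t n₀) ^ d - 1) / (ω ^ t n₀ - 1) := geom_sum_eq hne d
      _ = 0 := by
          rw [← pow_mul, mul_comm, pow_mul, hω1, one_pow]
          simp
  calc ∑ i ∈ Fintype.piFinset (fun _ : Fin m => range d),
        ∑ j ∈ Fintype.piFinset (fun _ : Fin m => range d),
          ω ^ ((∏ n : Fin m, j n) + ∑ n : Fin m, i n * j n) *
            (starRingEnd ℂ) (ω ^ ((∏ n : Fin m, j n) + ∑ n : Fin m, ((i n + s n) % d) * j n))
      = ∑ i ∈ Fintype.piFinset (fun _ : Fin m => range d),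
          ∑ j ∈ Fintype.piFinset (fun _ : Fin m => range d), ∏ n, ω ^ (t n * j n) :=
        Finset.sum_congr rfl fun i _ => Finset.sum_congr rfl fun j _ => key i j
    _ = 0 := by
        have hz : ∑ j ∈ Fintype.piFinset (fun _ : Fin m => range d),
            ∏ n, ω ^ (t n * j n) = 0 := by
          rw [← Finset.prod_univ_sum (fun _ : Fin m => range d) (fun n k => ω ^ (t n * k))]
          exact Finset.prod_eq_zero (Finset.mem_univ n₀) hzero
        simp [hz]
end

section
/- The m-dimensional array S of size d² × d² × ⋯ × d² formed by concatenating the 2m-dimensional array S'[i_0,…,i_{2m-1}] = ω^{∏_{n=m}^{2m-1} i_n + Σ_{n=0}^{m-1} i_n i_{n+m}} (ω = e^{2πi/d}), i.e., S[d·q_0+r_0, …, d·q_{m-1}+r_{m-1}] = S'[q_0,…,q_{m-1},r_0,…,r_{m-1}] for 0 ≤ q_k, r_k < d, is a perfect array: all off-peak periodic autocorrelations of S vanish. -/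
open Finset Complex

/-!
Write each coordinate as `d * q + r` with `q, r < d` and let `phase d x = ∏ r + ∑ q * r ∈ ZMod d`,
so that the array is `ψ ∘ phase d` for the standard additive character `ψ` of `ZMod d`.
Since `phase d (d • q + u) = phase d u + ∑ q * u`, the correlation at shift `s` factors as
`(∑_q ψ (-∑ q * s)) * (∑_r ψ (phase d r - phase d (r + s)))`. The first factor vanishes unless
`d ∣ s n` for all `n`; then `s = d • σ`, the second factor is `∑_r ψ (-∑ r * σ)`, and it vanishes
because `d² ∤ s n` forces `σ n ≠ 0` in `ZMod d` for some `n`.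
-/

lemma AddChar.map_sum_eq_prod {A M ι : Type*} [AddCommMonoid A] [CommMonoid M] (ψ : AddChar A M)
    (s : Finset ι) (f : ι → A) : ψ (∑ i ∈ s, f i) = ∏ i ∈ s, ψ (f i) :=
  map_prod ψ.toMonoidHom (fun i => Multiplicative.ofAdd (f i)) s

namespace FrankHeimiller

variable {ι : Type*} [Fintype ι]

lemma sum_piFinset_range_mul [DecidableEq ι] {M : Type*} [AddCommMonoid M] (d e : ℕ)
    (g : (ι → ℕ) → M) :
    ∑ x ∈ Fintype.piFinset fun _ : ι => range (d * e), g x =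
      ∑ q ∈ Fintype.piFinset (fun _ : ι => range e),
        ∑ r ∈ Fintype.piFinset (fun _ : ι => range d), g (d • q + r) := by
  rw [← sum_product']
  refine sum_nbij' (fun x => (fun n => x n / d, fun n => x n % d)) (fun p => d • p.1 + p.2)
    ?_ ?_ ?_ ?_ (fun x _ => ?_)
  all_goals simp only [Fintype.mem_piFinset, mem_range, mem_product,
    Pi.add_apply, Pi.smul_apply, smul_eq_mul, Prod.forall, Prod.ext_iff, funext_iff]
  · intro x hx
    refine ⟨fun n => Nat.div_lt_of_lt_mul (hx n), fun n => Nat.mod_lt _ ?_⟩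
    exact Nat.pos_of_ne_zero fun hd => by simpa [hd] using hx n
  · intro q r ⟨hq, hr⟩ n
    nlinarith [hq n, hr n]
  · intro x _ n
    exact Nat.div_add_mod (x n) d
  · rintro q r ⟨-, hr⟩
    exact ⟨fun n => by rw [Nat.mul_add_div (Nat.zero_lt_of_lt (hr n)), Nat.div_eq_of_lt (hr n),
      add_zero], fun n => by rw [Nat.mul_add_mod, Nat.mod_eq_of_lt (hr n)]⟩
  · exact congrArg g (funext fun n => (Nat.div_add_mod (x n) d).symm)

def phase (d : ℕ) (x : ι → ℕ) : ZMod d :=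
  ∏ n, (x n : ZMod d) + ∑ n, ((x n / d : ℕ) : ZMod d) * x n

lemma phase_mod_sq (d : ℕ) (x : ι → ℕ) : phase d (fun n => x n % d ^ 2) = phase d x := by
  have hcast (a : ℕ) : ((a % (d * d) : ℕ) : ZMod d) = a :=
    (ZMod.natCast_eq_natCast_iff' _ _ d).mpr (Nat.mod_mod_of_dvd _ (dvd_mul_right d d))
  simp only [phase, sq, hcast, Nat.mod_mul_right_div_self, ZMod.natCast_mod]

variable {d : ℕ} [NeZero d]

lemma phase_mul_add (q u : ι → ℕ) :
    phase d (d • q + u) = phase d u + ∑ n, (q n : ZMod d) * u n := by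
  simp only [phase, Pi.add_apply, Pi.smul_apply, smul_eq_mul, Nat.mul_add_div (NeZero.pos d)]
  push_cast [ZMod.natCast_self]
  simp only [zero_mul, zero_add, add_mul, sum_add_distrib]
  ring

lemma exp_pow_eq_stdAddChar (k : ℕ) :
    Complex.exp (2 * Real.pi * Complex.I / d) ^ k = ZMod.stdAddChar (k : ZMod d) := by
  have h := ZMod.stdAddChar_coe (N := d) k
  simp only [Int.cast_natCast] at h
  rw [h, ← Complex.exp_nat_mul]
  ring_nf

lemma exp_pow_eq_stdAddChar_phase (x : ι → ℕ) :
    Complex.exp (2 * Real.pi * Complex.I / d) ^ (∏ n, x n % d + ∑ n, x n / d * (x n % d)) =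
      ZMod.stdAddChar (phase d x) := by
  rw [exp_pow_eq_stdAddChar]
  push_cast [ZMod.natCast_mod]
  rfl

lemma sum_range_stdAddChar_mul_eq_zero {b : ZMod d} (hb : b ≠ 0) :
    ∑ k ∈ range d, ZMod.stdAddChar ((k : ZMod d) * b) = 0 := by
  have hψb : ZMod.stdAddChar b ≠ 1 := by
    rwa [← AddChar.map_zero_eq_one (ZMod.stdAddChar (N := d)), ZMod.injective_stdAddChar.ne_iff]
  simp_rw [← nsmul_eq_mul, AddChar.map_nsmul_eq_pow]
  rw [geom_sum_eq hψb, ← AddChar.map_nsmul_eq_pow, nsmul_eq_mul, ZMod.natCast_self, zero_mul,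
    AddChar.map_zero_eq_one, sub_self, zero_div]

lemma sum_piFinset_range_stdAddChar_eq_zero [DecidableEq ι] {c : ι → ZMod d} (hc : c ≠ 0) :
    ∑ x ∈ Fintype.piFinset (fun _ : ι => range d), ZMod.stdAddChar (∑ n, (x n : ZMod d) * c n) =
      0 := by
  obtain ⟨n, hn⟩ := Function.ne_iff.mp hc
  simp_rw [AddChar.map_sum_eq_prod]
  rw [← prod_univ_sum (fun _ => range d) fun i k => ZMod.stdAddChar ((k : ZMod d) * c i)]
  exact prod_eq_zero (mem_univ n) (sum_range_stdAddChar_mul_eq_zero hn)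

lemma correlation_term_eq_stdAddChar (x s : ι → ℕ) :
    Complex.exp (2 * Real.pi * Complex.I / d) ^ (∏ n, x n % d + ∑ n, x n / d * (x n % d)) *
      (starRingEnd ℂ) (Complex.exp (2 * Real.pi * Complex.I / d) ^
        (∏ n, (x n + s n) % d ^ 2 % d +
          ∑ n, (x n + s n) % d ^ 2 / d * ((x n + s n) % d ^ 2 % d))) =
      ZMod.stdAddChar (phase d x - phase d (x + s)) := by
  rw [exp_pow_eq_stdAddChar_phase, exp_pow_eq_stdAddChar_phase fun n => (x n + s n) % d ^ 2,
    phase_mod_sq, ← AddChar.map_neg_eq_conj, ← AddChar.map_add_eq_mul, sub_eq_add_neg]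
  rfl

lemma sum_stdAddChar_phase_sub_eq_mul [DecidableEq ι] (s : ι → ℕ) :
    ∑ x ∈ Fintype.piFinset (fun _ : ι => range (d * d)),
        ZMod.stdAddChar (phase d x - phase d (x + s)) =
      (∑ q ∈ Fintype.piFinset (fun _ : ι => range d),
          ZMod.stdAddChar (∑ n, (q n : ZMod d) * -(s n : ZMod d))) *
        ∑ r ∈ Fintype.piFinset (fun _ : ι => range d),
          ZMod.stdAddChar (phase d r - phase d (r + s)) := by
  rw [sum_piFinset_range_mul, sum_mul_sum]
  refine sum_congr rfl fun q _ => sum_congr rfl fun r _ => ?_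
  rw [add_assoc, phase_mul_add, phase_mul_add,
    ← AddChar.map_add_eq_mul]
  congr 1
  simp only [Pi.add_apply, Nat.cast_add, mul_add, mul_neg, sum_add_distrib, sum_neg_distrib]
  ring

lemma phase_sub_phase_add_smul (r σ : ι → ℕ) :
    phase d r - phase d (r + d • σ) = ∑ n, (r n : ZMod d) * -(σ n : ZMod d) := by
  rw [add_comm r, phase_mul_add]
  simp only [mul_neg, sum_neg_distrib, mul_comm]
  ring

end FrankHeimiller

open FrankHeimiller

/-- Theorem 4.6: the `m`-dimensional array of size `d² × ⋯ × d²` given by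
`S[d·q_0+r_0, …, d·q_{m-1}+r_{m-1}] = ω^{∏ r_n + Σ q_n r_n}` (Construction I,
the multi-dimensional Frank–Heimiller generalization) is perfect. -/
theorem constructionI_perfect (m d : ℕ) (hd : 0 < d) :
    ∀ s : Fin m → ℕ, (¬ ∀ n, d ^ 2 ∣ s n) →
      ∑ x ∈ Fintype.piFinset (fun _ : Fin m => range (d ^ 2)),
        Complex.exp (2 * Real.pi * Complex.I / d) ^
            ((∏ n : Fin m, (x n % d)) + ∑ n : Fin m, (x n / d) * (x n % d)) *
          (starRingEnd ℂ) (Complex.exp (2 * Real.pi * Complex.I / d) ^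
            ((∏ n : Fin m, (((x n + s n) % d ^ 2) % d)) +
              ∑ n : Fin m, (((x n + s n) % d ^ 2) / d) * (((x n + s n) % d ^ 2) % d))) = 0 := by
  intro s hs
  have : NeZero d := ⟨hd.ne'⟩
  simp only [correlation_term_eq_stdAddChar]
  rw [sq, sum_stdAddChar_phase_sub_eq_mul]
  by_cases hds : ∀ n, d ∣ s n
  · choose σ hσ using hds
    obtain rfl : s = d • σ := funext hσ
    obtain ⟨n, hn⟩ := not_forall.mp hs
    have hσn : (σ n : ZMod d) ≠ 0 := (ZMod.natCast_eq_zero_iff _ _).not.mpr fun h =>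
      hn (by rw [sq]; exact Nat.mul_dvd_mul_left d h)
    simp only [phase_sub_phase_add_smul]
    rw [sum_piFinset_range_stdAddChar_eq_zero (c := fun n => -(σ n : ZMod d))
      (Function.ne_iff.mpr ⟨n, neg_ne_zero.mpr hσn⟩), mul_zero]
  · obtain ⟨n, hn⟩ := not_forall.mp hds
    have hsn : (s n : ZMod d) ≠ 0 := (ZMod.natCast_eq_zero_iff _ _).not.mpr hn
    rw [sum_piFinset_range_stdAddChar_eq_zero (Function.ne_iff.mpr ⟨n, neg_ne_zero.mpr hsn⟩),
      zero_mul]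
end

section
/- Let d be even and ω = e^{2πi/d}. The 2d² × 2d² array S[i,j] = ω^{⌊ij/(2d)⌋} is a perfect array: for every shift (h,v) with (h,v) ≢ (0,0) mod 2d², Σ_{i=0}^{2d²-1} Σ_{j=0}^{2d²-1} ω^{⌊ij/(2d)⌋} · conj(ω^{⌊(i+v)(j+h)/(2d)⌋}) = 0, with indices i+v and j+h taken mod 2d². -/
open Finset Complex

/-- reindex a sum over `range (m*n)` as a double sum, `i = n*p+q`. -/
lemma sum_range_mul' {β : Type*} [AddCommMonoid β] (m n : ℕ) (f : ℕ → β) :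
    ∑ i ∈ range (m * n), f i = ∑ p ∈ range m, ∑ q ∈ range n, f (n * p + q) := by
  induction m with
  | zero => simp
  | succ m ih =>
      rw [Nat.succ_mul, Finset.sum_range_add, ih, Finset.sum_range_succ]
      simp [Nat.mul_comm]

lemma geom_nat (x : ℂ) (n : ℕ) (h1 : x ^ n = 1) (h2 : x ≠ 1) :
    ∑ k ∈ range n, x ^ k = 0 := by
  rw [geom_sum_eq h2 n, h1, sub_self, zero_div]

/-- key nat division lemma -/
lemma K0 (e y w : ℕ) (hw : w < e) : (e * y + w) / (2 * e) = y / 2 := by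
  have he : 0 < e := by omega
  have h1 : e * y + w = 2 * e * (y/2) + (e * (y % 2) + w) := by
    nlinarith [Nat.div_add_mod y 2]
  have h2 : e * (y % 2) + w < 2 * e := by
    have := Nat.mod_lt y (show 0<2 by omega); interval_cases h : y % 2 <;> omega
  rw [h1, Nat.mul_add_div (by omega), Nat.div_eq_of_lt h2, Nat.add_zero]

/-- The central floor identity:
`(x + e*? ...` : `(x + d*m)/(2d) = x/(2d) + (m + (x/d)%2)/2`. -/
lemma Kmain (e x m : ℕ) (he : 0 < e) :
    (x + e * m) / (2 * e) = x / (2 * e) + (m + (x / e) % 2) / 2 := by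
  have hx : x = e * (x / e) + x % e := (Nat.div_add_mod x e).symm
  have hw : x % e < e := Nat.mod_lt x he
  have h1 : x + e * m = e * (x / e + m) + x % e := by rw [Nat.mul_add]; omega
  rw [h1, K0 e _ _ hw]
  rw [show x / (2*e) = (x/e)/2 by conv_lhs => rw [hx, K0 e _ _ hw]]
  omega

section zeta
variable {d : ℕ} {ζ : ℂ}

lemma zeta_ne (hd : 0 < d) (hζ : IsPrimitiveRoot ζ d) : ζ ≠ 0 := by
  intro h
  have := hζ.pow_eq_one
  rw [h] at this
  rw [zero_pow hd.ne'] at this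
  exact zero_ne_one this

lemma zc (hd : 0 < d) (hζ : IsPrimitiveRoot ζ d) (m n : ℤ) (h : (d:ℤ) ∣ (m - n)) :
    ζ ^ m = ζ ^ n := by
  obtain ⟨k, hk⟩ := h
  have h0 : ζ ≠ 0 := zeta_ne hd hζ
  have hm : m = n + d * k := by omega
  rw [hm, zpow_add₀ h0, zpow_mul, show ζ ^ (d:ℤ) = 1 by
    rw [zpow_natCast, hζ.pow_eq_one]]
  simp

lemma geomζ (hd : 0 < d) (hζ : IsPrimitiveRoot ζ d) (c : ℤ) (hc : ¬ (d:ℤ) ∣ c)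
    (n : ℕ) (hn : d ∣ n) : ∑ k ∈ range n, ζ ^ (c * (k:ℤ)) = 0 := by
  have h0 : ζ ≠ 0 := zeta_ne hd hζ
  have : ∀ k : ℕ, ζ ^ (c * (k:ℤ)) = (ζ ^ c) ^ k := by
    intro k; rw [zpow_mul, zpow_natCast]
  simp only [this]
  apply geom_nat
  · rw [← zpow_natCast (ζ ^ c) n, ← zpow_mul, mul_comm]
    obtain ⟨m, rfl⟩ := hn
    apply (hζ.zpow_eq_one_iff_dvd _).2
    push_cast; exact ⟨m * c, by ring⟩
  · intro h
    exact hc ((hζ.zpow_eq_one_iff_dvd _).1 h)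

lemma zeta_half (e : ℕ) (he : 0 < e) (hde : d = 2 * e) (hζ : IsPrimitiveRoot ζ d) :
    ζ ^ (e:ℤ) = -1 := by
  have hd : 0 < d := by omega
  have h2 : (ζ ^ (e:ℤ)) ^ 2 = 1 := by
    rw [← zpow_natCast _ 2, ← zpow_mul]
    apply (hζ.zpow_eq_one_iff_dvd _).2
    exact ⟨1, by push_cast [hde]; ring⟩
  have h1 : ζ ^ (e:ℤ) ≠ 1 := by
    intro h
    have := (hζ.zpow_eq_one_iff_dvd _).1 h
    rw [Int.natCast_dvd_natCast] at this
    have := Nat.le_of_dvd he this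
    omega
  have hfac : (ζ ^ (e:ℤ) - 1) * (ζ ^ (e:ℤ) + 1) = 0 := by linear_combination h2
  rcases mul_eq_zero.1 hfac with h | h
  · exact absurd (by linear_combination h) h1
  · linear_combination h
end zeta


section classes
variable {d e : ℕ} {ζ : ℂ}

lemma affine_kill (hd : 0 < d) (hζ : IsPrimitiveRoot ζ d) (n m b a c : ℕ)
    (hn : d ∣ n) (hb : ¬ (d:ℤ) ∣ (b:ℤ)) :
    ∑ u ∈ range n, ∑ t ∈ range m, ζ ^ (-((u*b + t*a + c : ℕ) : ℤ)) = 0 := by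
  have h0 := zeta_ne hd hζ
  have hterm : ∀ u t : ℕ, ζ ^ (-((u*b + t*a + c : ℕ) : ℤ))
      = ζ ^ ((-(b:ℤ)) * u) * ζ ^ (-((t*a + c : ℕ) : ℤ)) := by
    intro u t
    rw [← zpow_add₀ h0]
    congr 1
    push_cast; ring
  calc ∑ u ∈ range n, ∑ t ∈ range m, ζ ^ (-((u*b + t*a + c : ℕ) : ℤ))
      = ∑ u ∈ range n, (ζ ^ ((-(b:ℤ)) * u) * ∑ t ∈ range m, ζ ^ (-((t*a + c : ℕ) : ℤ))) := by
        refine Finset.sum_congr rfl fun u _ => ?_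
        rw [Finset.mul_sum]
        exact Finset.sum_congr rfl fun t _ => hterm u t
    _ = (∑ u ∈ range n, ζ ^ ((-(b:ℤ)) * (u:ℤ))) * (∑ t ∈ range m, ζ ^ (-((t*a + c : ℕ) : ℤ))) := by
        rw [Finset.sum_mul]
    _ = 0 := by
        rw [geomζ hd hζ (-(b:ℤ)) (by simpa using hb) n hn, zero_mul]

lemma pair_kill {e : ℕ} (g : ℕ → ℂ) (hg : ∀ t, t < e → g (e + t) = - g t) :
    ∑ t ∈ range (e + e), g t = 0 := by
  rw [Finset.sum_range_add]
  have h2 : ∑ t ∈ range e, g (e + t) = - ∑ t ∈ range e, g t := by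
    rw [← Finset.sum_neg_distrib]
    exact Finset.sum_congr rfl fun t ht => hg t (mem_range.1 ht)
  rw [h2]; ring

/-- class with `s` even, `r = 2t+1` odd, `a` odd: killed by pairing `t ↔ t+e`. -/
lemma S01_kill (he : 0 < e) (hde : d = 2*e) (hζ : IsPrimitiveRoot ζ d)
    (a b : ℕ) (ha : a % 2 = 1) (u : ℕ) :
    ∑ t ∈ range d,
      ζ ^ (-(((2*u)*b + (2*t+1)*a + d*a*b + ((2*u)*(2*t+1)/d)%2)/2 : ℕ) : ℤ) = 0 := by
  have hd : 0 < d := by omega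
  have h0 := zeta_ne hd hζ
  obtain ⟨a₁, ha₁⟩ : ∃ a₁, a = 2*a₁+1 := ⟨a/2, by omega⟩
  have hmin : ζ ^ (-(e:ℤ)) = -1 := by
    rw [zpow_neg, zeta_half e he hde hζ]; norm_num
  rw [show range d = range (e+e) by rw [show d = e+e by omega]]
  apply pair_kill
  intro t ht
  have hδ : (2*u)*(2*(e+t)+1)/d = (2*u)*(2*t+1)/d + 2*u := by
    have h1 : (2*u)*(2*(e+t)+1) = (2*u)*(2*t+1) + (2*u)*d := by rw [hde]; ring
    rw [h1, Nat.add_mul_div_right _ _ hd]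
  have hδ2 : ((2*u)*(2*(e+t)+1)/d)%2 = ((2*u)*(2*t+1)/d)%2 := by omega
  have hnum : (2*u)*b + (2*(e+t)+1)*a + d*a*b + ((2*u)*(2*(e+t)+1)/d)%2
      = ((2*u)*b + (2*t+1)*a + d*a*b + ((2*u)*(2*t+1)/d)%2) + 2*(e*a) := by
    rw [hδ2]; ring
  have hF : ((2*u)*b + (2*(e+t)+1)*a + d*a*b + ((2*u)*(2*(e+t)+1)/d)%2)/2
      = ((2*u)*b + (2*t+1)*a + d*a*b + ((2*u)*(2*t+1)/d)%2)/2 + (d*a₁ + e) := by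
    rw [hnum]
    have : e*a = d*a₁ + e := by rw [hde, ha₁]; ring
    omega
  set A := ((2*u)*b + (2*t+1)*a + d*a*b + ((2*u)*(2*t+1)/d)%2)/2 with hA
  rw [hF]
  have hzc := zc hd hζ (-((A + (d*a₁+e) :ℕ):ℤ)) (-(A:ℤ) + -(e:ℤ)) ⟨-(a₁:ℤ), by push_cast; ring⟩
  rw [hzc, zpow_add₀ h0, hmin]
  ring
/-- class with `s = 2u+1`, `r = 2t+1` odd, `a` even: per-`u` factorization. -/
lemma S11_even (he : 0 < e) (hde : d = 2*e) (hζ : IsPrimitiveRoot ζ d)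
    (a b a₁ b₁ : ℕ) (ha : a = 2*a₁) (hb : b = 2*b₁+1) (u : ℕ) :
    ∑ t ∈ range d,
      ζ ^ (-(((2*u+1)*b + (2*t+1)*a + d*a*b + ((2*u+1)*(2*t+1)/d)%2)/2 : ℕ) : ℤ)
    = ζ ^ ((-(b:ℤ)) * u) *
        ((1 + ζ^(-1:ℤ)) * ∑ t ∈ range e, ζ ^ (-((t*a + e*a*b + a₁ + b₁ : ℕ) : ℤ))) := by
  have hd : 0 < d := by omega
  have h0 := zeta_ne hd hζ
  rw [show range d = range (e+e) by rw [show d = e+e by omega]]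
  rw [Finset.sum_range_add, Finset.mul_sum, Finset.mul_sum, ← Finset.sum_add_distrib]
  refine Finset.sum_congr rfl fun t ht => ?_
  have hδ : (2*u+1)*(2*(e+t)+1)/d = (2*u+1)*(2*t+1)/d + (2*u+1) := by
    have h1 : (2*u+1)*(2*(e+t)+1) = (2*u+1)*(2*t+1) + (2*u+1)*d := by rw [hde]; ring
    rw [h1, Nat.add_mul_div_right _ _ hd]
  set δ := ((2*u+1)*(2*t+1)/d)%2 with hδdef
  have hδlt : δ ≤ 1 := by omega
  have hC1 : ((2*u+1)*b + (2*t+1)*a + d*a*b + ((2*u+1)*(2*t+1)/d)%2)/2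
      = (u*b + t*a + e*a*b + a₁ + b₁) + δ := by
    have hnum : (2*u+1)*b + (2*t+1)*a + d*a*b + δ
        = 2*(u*b + t*a + e*a*b + a₁ + b₁) + 1 + δ := by rw [hde, ha, hb]; ring
    omega
  have hC2 : ((2*u+1)*b + (2*(e+t)+1)*a + d*a*b + ((2*u+1)*(2*(e+t)+1)/d)%2)/2
      = ((u*b + t*a + e*a*b + a₁ + b₁) + d*a₁) + (1 - δ) := by
    have hδ' : ((2*u+1)*(2*(e+t)+1)/d)%2 = (δ + 1) % 2 := by omega
    have hnum : (2*u+1)*b + (2*(e+t)+1)*a + d*a*b + (δ+1)%2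
        = 2*((u*b + t*a + e*a*b + a₁ + b₁) + d*a₁) + 1 + (δ+1)%2 := by
      rw [hde, ha, hb]; ring
    rw [hδ']
    omega
  rw [hC1, hC2]
  set C := u*b + t*a + e*a*b + a₁ + b₁ with hCdef
  have hzc := zc hd hζ (-((C + d*a₁ + (1-δ) : ℕ):ℤ)) (-((C + (1-δ) : ℕ):ℤ))
    ⟨-(a₁:ℤ), by push_cast; ring⟩
  rw [hzc]
  have hsplit : ∀ m : ℕ, ζ ^ (-((C + m : ℕ) : ℤ)) = ζ ^ (-(C:ℤ)) * ζ ^ (-(m:ℤ)) := by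
    intro m
    rw [← zpow_add₀ h0]
    congr 1; push_cast; ring
  have hC0 : ζ ^ (-(C:ℤ)) = ζ ^ ((-(b:ℤ)) * u) * ζ ^ (-((t*a + e*a*b + a₁ + b₁ : ℕ) : ℤ)) := by
    rw [← zpow_add₀ h0]
    congr 1; rw [hCdef]; push_cast; ring
  interval_cases δ
  · rw [hsplit 0, hsplit 1, hC0]
    push_cast
    rw [neg_zero, zpow_zero]
    ring
  · rw [hsplit 0, hsplit 1, hC0]
    push_cast
    rw [neg_zero, zpow_zero]
    ring

/-- Case `b` odd of the final `2d × 2d` sum. -/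
lemma LB (he : 0 < e) (hde : d = 2*e) (hζ : IsPrimitiveRoot ζ d)
    (a b : ℕ) (hb : b % 2 = 1) :
    ∑ s ∈ range (2*d), ∑ r ∈ range (2*d),
      ζ ^ (-((s*b + r*a + d*a*b + (s*r/d)%2)/2 : ℕ) : ℤ) = 0 := by
  have hd : 0 < d := by omega
  have h0 := zeta_ne hd hζ
  obtain ⟨b₁, hb₁⟩ : ∃ b₁, b = 2*b₁+1 := ⟨b/2, by omega⟩
  have hbd : ¬ (d:ℤ) ∣ (b:ℤ) := by
    rw [Int.natCast_dvd_natCast]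
    rintro ⟨k, hk⟩
    have : 2 ∣ b := ⟨e*k, by rw [hk, hde]; ring⟩
    omega
  simp only [show (2:ℕ)*d = d*2 from mul_comm 2 d, sum_range_mul' d 2]
  simp only [Finset.sum_range_succ, Finset.sum_range_one, Finset.sum_add_distrib, add_zero,
    Finset.sum_range_zero, zero_add, Nat.mul_zero]
  have h00 : ∑ u ∈ Finset.range d, ∑ t ∈ Finset.range d,
      ζ ^ (-((2*u*b + 2*t*a + d*a*b + 2*u*(2*t)/d % 2)/2 : ℕ) : ℤ) = 0 := by
    rw [← affine_kill (ζ := ζ) hd hζ d d b a (e*a*b) dvd_rfl hbd]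
    refine Finset.sum_congr rfl fun u _ => Finset.sum_congr rfl fun t _ => ?_
    rw [show (2*u*b + 2*t*a + d*a*b + 2*u*(2*t)/d % 2)/2 = u*b + t*a + e*a*b by
      have hnum : 2*u*b + 2*t*a + d*a*b = 2*(u*b + t*a + e*a*b) := by rw [hde]; ring
      omega]
  have h10 : ∑ u ∈ Finset.range d, ∑ t ∈ Finset.range d,
      ζ ^ (-(((2*u+1)*b + 2*t*a + d*a*b + (2*u+1)*(2*t)/d % 2)/2 : ℕ) : ℤ) = 0 := by
    rw [Finset.sum_comm]
    refine Finset.sum_eq_zero fun t _ => ?_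
    rw [← S01_kill he hde hζ b a hb t]
    refine Finset.sum_congr rfl fun u _ => ?_
    rw [show ((2*u+1)*b + 2*t*a + d*a*b + (2*u+1)*(2*t)/d % 2)/2
        = ((2*t)*a + (2*u+1)*b + d*b*a + ((2*t)*(2*u+1)/d)%2)/2 by
      rw [Nat.mul_comm (2*u+1) (2*t)]; congr 1; ring]
  have h01 : ∑ u ∈ Finset.range d, ∑ t ∈ Finset.range d,
      ζ ^ (-((2*u*b + (2*t+1)*a + d*a*b + 2*u*(2*t+1)/d % 2)/2 : ℕ) : ℤ) = 0 := by
    rcases Nat.even_or_odd a with ⟨a₁, ha₁⟩ | hodd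
    · rw [← affine_kill (ζ := ζ) hd hζ d d b a (e*a*b + a₁) dvd_rfl hbd]
      refine Finset.sum_congr rfl fun u _ => Finset.sum_congr rfl fun t _ => ?_
      rw [show (2*u*b + (2*t+1)*a + d*a*b + 2*u*(2*t+1)/d % 2)/2 = u*b + t*a + (e*a*b + a₁) by
        have hnum : 2*u*b + (2*t+1)*a + d*a*b = 2*(u*b + t*a + (e*a*b + a₁)) := by
          rw [hde, ha₁]; ring
        omega]
    · exact Finset.sum_eq_zero fun u _ => S01_kill he hde hζ a b (Nat.odd_iff.1 hodd) u
  have h11 : ∑ u ∈ Finset.range d, ∑ t ∈ Finset.range d,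
      ζ ^ (-(((2*u+1)*b + (2*t+1)*a + d*a*b + (2*u+1)*(2*t+1)/d % 2)/2 : ℕ) : ℤ) = 0 := by
    rcases Nat.even_or_odd a with ⟨a₁, ha₁⟩ | hodd
    · calc ∑ u ∈ Finset.range d, ∑ t ∈ Finset.range d,
          ζ ^ (-(((2*u+1)*b + (2*t+1)*a + d*a*b + (2*u+1)*(2*t+1)/d % 2)/2 : ℕ) : ℤ)
          = ∑ u ∈ Finset.range d, ζ ^ ((-(b:ℤ)) * u) *
              ((1 + ζ^(-1:ℤ)) * ∑ t ∈ range e, ζ ^ (-((t*a + e*a*b + a₁ + b₁ : ℕ) : ℤ))) := by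
            exact Finset.sum_congr rfl fun u _ =>
              S11_even he hde hζ a b a₁ b₁ (by omega) hb₁ u
        _ = (∑ u ∈ Finset.range d, ζ ^ ((-(b:ℤ)) * (u:ℤ))) *
              ((1 + ζ^(-1:ℤ)) * ∑ t ∈ range e, ζ ^ (-((t*a + e*a*b + a₁ + b₁ : ℕ) : ℤ))) := by
            rw [Finset.sum_mul]
        _ = 0 := by
            rw [geomζ hd hζ (-(b:ℤ)) (by simpa using hbd) d dvd_rfl, zero_mul]
    · obtain ⟨a₁, ha₁⟩ := hodd
      rw [← affine_kill (ζ := ζ) hd hζ d d b a (e*a*b + a₁ + b₁ + 1) dvd_rfl hbd]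
      refine Finset.sum_congr rfl fun u _ => Finset.sum_congr rfl fun t _ => ?_
      rw [show ((2*u+1)*b + (2*t+1)*a + d*a*b + (2*u+1)*(2*t+1)/d % 2)/2
          = u*b + t*a + (e*a*b + a₁ + b₁ + 1) by
        have hnum : (2*u+1)*b + (2*t+1)*a + d*a*b
            = 2*(u*b + t*a + (e*a*b + a₁ + b₁ + 1)) := by rw [hde, ha₁, hb₁]; ring
        omega]
  rw [h00, h10, h01, h11]
  norm_num

/-- The final `2d × 2d` correlation sum vanishes. -/
lemma L1 (he : 0 < e) (hde : d = 2*e) (hζ : IsPrimitiveRoot ζ d) (a b : ℕ)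
    (ha2 : a < 2*d) (hb2 : b < 2*d) (hab : ¬(a = 0 ∧ b = 0)) :
    ∑ s ∈ range (2*d), ∑ r ∈ range (2*d),
      ζ ^ ((↑(s*r/(2*d)) - ↑((s+d*a)*(r+d*b)/(2*d))) : ℤ) = 0 := by
  have hd : 0 < d := by omega
  have step : ∀ s r : ℕ, ζ ^ ((↑(s*r/(2*d)) - ↑((s+d*a)*(r+d*b)/(2*d))) : ℤ)
      = ζ ^ (-((s*b + r*a + d*a*b + (s*r/d)%2)/2 : ℕ) : ℤ) := by
    intro s r
    have h1 : (s+d*a)*(r+d*b) = s*r + d*(s*b + r*a + d*a*b) := by ring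
    have h2 : (s+d*a)*(r+d*b)/(2*d) = s*r/(2*d) + (s*b + r*a + d*a*b + (s*r/d)%2)/2 := by
      rw [h1, Kmain d (s*r) _ hd]
    rw [h2]
    congr 1
    rw [Nat.cast_add]
    ring
  simp only [step]
  rcases Nat.even_or_odd b with ⟨b₁, hb₁⟩ | hbodd
  · rcases Nat.even_or_odd a with ⟨a₁, ha₁⟩ | haodd
    · -- both even
      have key : ∀ s r : ℕ, (s*b + r*a + d*a*b + (s*r/d)%2)/2
          = s*b₁ + r*a₁ + d*a₁*b := by
        intro s r
        have hnum : s*b + r*a + d*a*b = 2*(s*b₁ + r*a₁ + d*a₁*b) := by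
          rw [ha₁, hb₁]; ring
        omega
      simp only [key]
      rcases Nat.eq_zero_or_pos b₁ with hb0 | hb0
      · have ha0 : a₁ ≠ 0 := by rintro rfl; exact hab ⟨by omega, by omega⟩
        rw [Finset.sum_comm]
        rw [← affine_kill (ζ := ζ) hd hζ (2*d) (2*d) a₁ b₁ (d*a₁*b) ⟨2, by ring⟩
          (by rw [Int.natCast_dvd_natCast]; intro hh; have := Nat.le_of_dvd (by omega) hh; omega)]
        refine Finset.sum_congr rfl fun r _ => Finset.sum_congr rfl fun s _ => ?_
        rw [show s*b₁ + r*a₁ + d*a₁*b = r*a₁ + s*b₁ + (d*a₁*b) by ring]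
      · have hbd : ¬ (d:ℤ) ∣ (b₁:ℤ) := by
          rw [Int.natCast_dvd_natCast]; intro hh
          have := Nat.le_of_dvd hb0 hh; omega
        exact affine_kill (ζ := ζ) hd hζ (2*d) (2*d) b₁ a₁ (d*a₁*b) ⟨2, by ring⟩ hbd
    · -- a odd, b even: transpose
      rw [Finset.sum_comm]
      rw [← LB he hde hζ b a (Nat.odd_iff.1 haodd)]
      refine Finset.sum_congr rfl fun r _ => Finset.sum_congr rfl fun s _ => ?_
      rw [show (s*b + r*a + d*a*b + (s*r/d)%2)/2 = (r*a + s*b + d*b*a + (r*s/d)%2)/2 by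
        rw [Nat.mul_comm s r]; congr 1; ring]
  · exact LB he hde hζ a b (Nat.odd_iff.1 hbodd)

lemma split_div (hd : 0 < d) (x c y : ℕ) :
    ((x + 2*d*c)*y)/(2*d) = (x*y)/(2*d) + c*y := by
  have h1 : (x + 2*d*c)*y = x*y + (2*d)*(c*y) := by ring
  rw [h1, Nat.add_mul_div_left _ _ (by omega : 0 < 2*d)]

lemma L2 (he : 0 < e) (hde : d = 2*e) (hζ : IsPrimitiveRoot ζ d) (h v : ℕ)
    (hdv : d ∣ v) (hdh : d ∣ h) (hnb : ¬(2*d^2 ∣ h ∧ 2*d^2 ∣ v)) :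
    ∑ s ∈ range (2*d), ∑ r ∈ range (2*d),
      ζ ^ ((↑(s*r/(2*d)) - ↑((s+v)*(r+h)/(2*d))) : ℤ) = 0 := by
  have hd : 0 < d := by omega
  obtain ⟨a₀, rfl⟩ := hdv
  obtain ⟨b₀, rfl⟩ := hdh
  set a := a₀ % (2*d) with haa
  set b := b₀ % (2*d) with hbb
  have ha₀ : a₀ = a + 2*d*(a₀/(2*d)) := by
    conv_lhs => rw [← Nat.mod_add_div a₀ (2*d)]
  have hb₀ : b₀ = b + 2*d*(b₀/(2*d)) := by
    conv_lhs => rw [← Nat.mod_add_div b₀ (2*d)]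
  have key : ∀ s r : ℕ, ∃ K : ℕ, (s + d*a₀)*(r + d*b₀)/(2*d)
      = (s+d*a)*(r+d*b)/(2*d) + d*K := by
    intro s r
    set k := a₀/(2*d)
    set l := b₀/(2*d)
    have e1 : s + d*a₀ = (s + d*a) + 2*d*(d*k) := by rw [ha₀]; ring
    have e2 : r + d*b₀ = (r + d*b) + 2*d*(d*l) := by rw [hb₀]; ring
    refine ⟨k*(r + d*b₀) + l*(s + d*a), ?_⟩
    rw [e1, split_div hd]
    rw [Nat.mul_comm (s+d*a) (r+d*b₀), e2, split_div hd, Nat.mul_comm (r+d*b) (s+d*a)]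
    ring
  have step : ∀ s r : ℕ, ζ ^ ((↑(s*r/(2*d)) - ↑((s + d*a₀)*(r + d*b₀)/(2*d))) : ℤ)
      = ζ ^ ((↑(s*r/(2*d)) - ↑((s+d*a)*(r+d*b)/(2*d))) : ℤ) := by
    intro s r
    obtain ⟨K, hK⟩ := key s r
    refine zc hd hζ _ _ ⟨-(K:ℤ), ?_⟩
    rw [hK]
    push_cast [Nat.cast_add]
    ring
  simp only [step]
  refine L1 he hde hζ a b (Nat.mod_lt _ (by omega)) (Nat.mod_lt _ (by omega)) ?_
  rintro ⟨ha0, hb0⟩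
  refine hnb ⟨⟨b₀/(2*d), ?_⟩, ⟨a₀/(2*d), ?_⟩⟩
  · conv_lhs => rw [hb₀, hb0]
    ring
  · conv_lhs => rw [ha₀, ha0]
    ring

lemma L3 (he : 0 < e) (hde : d = 2*e) (hζ : IsPrimitiveRoot ζ d) (h v : ℕ)
    (hdv : d ∣ v) (hnb : ¬(2*d^2 ∣ h ∧ 2*d^2 ∣ v)) :
    ∑ i ∈ range (2*d^2), ∑ r ∈ range (2*d),
      ζ ^ ((↑(i*r/(2*d)) - ↑((i+v)*(r+h)/(2*d))) : ℤ) = 0 := by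
  have hd : 0 < d := by omega
  have h0 := zeta_ne hd hζ
  rw [show range (2*d^2) = range (d*(2*d)) by rw [show 2*d^2 = d*(2*d) by ring]]
  rw [sum_range_mul' d (2*d)]
  have step : ∀ p s r : ℕ,
      ζ ^ ((↑((2*d*p+s)*r/(2*d)) - ↑((2*d*p+s+v)*(r+h)/(2*d))) : ℤ)
      = ζ ^ ((-(h:ℤ))*p) * ζ ^ ((↑(s*r/(2*d)) - ↑((s+v)*(r+h)/(2*d))) : ℤ) := by
    intro p s r
    have e1 : (2*d*p+s)*r/(2*d) = s*r/(2*d) + p*r := by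
      rw [show (2*d*p+s)*r = s*r + (2*d)*(p*r) by ring,
        Nat.add_mul_div_left _ _ (by omega : 0 < 2*d)]
    have e2 : (2*d*p+s+v)*(r+h)/(2*d) = (s+v)*(r+h)/(2*d) + p*(r+h) := by
      rw [show (2*d*p+s+v)*(r+h) = (s+v)*(r+h) + (2*d)*(p*(r+h)) by ring,
        Nat.add_mul_div_left _ _ (by omega : 0 < 2*d)]
    rw [e1, e2, ← zpow_add₀ h0]
    congr 1
    simp only [Nat.cast_add, Nat.cast_mul]
    ring
  have hshape : ∀ p s : ℕ, (2*d)*p + s = 2*d*p+s := fun _ _ => rfl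
  simp only [step]
  by_cases hdh : (d:ℤ) ∣ (h:ℤ)
  · -- drop the p part, constant sum
    obtain ⟨b₀, hb₀⟩ := id hdh
    have drop : ∀ p s r : ℕ,
        ζ ^ ((-(h:ℤ))*p) * ζ ^ ((↑(s*r/(2*d)) - ↑((s+v)*(r+h)/(2*d))) : ℤ)
        = ζ ^ ((↑(s*r/(2*d)) - ↑((s+v)*(r+h)/(2*d))) : ℤ) := by
      intro p s r
      rw [show ((-(h:ℤ))*p) = (d:ℤ) * (-b₀*p) by rw [hb₀]; ring, zpow_mul,
        show (ζ^(d:ℤ)) = 1 by rw [zpow_natCast, hζ.pow_eq_one], one_zpow, one_mul]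
    simp only [drop]
    rw [Finset.sum_const]
    have hL2 : ∑ s ∈ range (2*d), ∑ r ∈ range (2*d),
        ζ ^ ((↑(s*r/(2*d)) - ↑((s+v)*(r+h)/(2*d))) : ℤ) = 0 := by
      refine L2 he hde hζ h v hdv ?_ hnb
      rwa [Int.natCast_dvd_natCast] at hdh
    rw [hL2, smul_zero]
  · -- geometric kill in p
    have factor : ∀ p ∈ range d,
        (∑ s ∈ range (2*d), ∑ r ∈ range (2*d),
          ζ ^ ((-(h:ℤ))*p) * ζ ^ ((↑(s*r/(2*d)) - ↑((s+v)*(r+h)/(2*d))) : ℤ))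
        = ζ ^ ((-(h:ℤ))*(p:ℤ)) * (∑ s ∈ range (2*d), ∑ r ∈ range (2*d),
            ζ ^ ((↑(s*r/(2*d)) - ↑((s+v)*(r+h)/(2*d))) : ℤ)) := by
      intro p _
      rw [Finset.mul_sum]
      refine Finset.sum_congr rfl fun s _ => ?_
      rw [Finset.mul_sum]
    rw [Finset.sum_congr rfl factor, ← Finset.sum_mul,
      geomζ hd hζ (-(h:ℤ)) (by simpa using hdh) d dvd_rfl, zero_mul]

/-- Theorem 4.8 (Construction II): for `d` even, the `2d² × 2d²` array
`S[i,j] = ω^{⌊ij/(2d)⌋}` over `d`-th roots of unity is perfect. -/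
theorem constructionII_perfect (d : ℕ) (hd : Even d) (hd0 : 0 < d) :
    ∀ h v : ℕ, ¬ (2 * d ^ 2 ∣ h ∧ 2 * d ^ 2 ∣ v) →
      ∑ i ∈ range (2 * d ^ 2), ∑ j ∈ range (2 * d ^ 2),
        Complex.exp (2 * Real.pi * Complex.I / d) ^ (i * j / (2 * d)) *
          (starRingEnd ℂ) (Complex.exp (2 * Real.pi * Complex.I / d) ^
            (((i + v) % (2 * d ^ 2)) * ((j + h) % (2 * d ^ 2)) / (2 * d))) = 0 := by
  intro h v hnb
  set ζ : ℂ := Complex.exp (2 * Real.pi * Complex.I / d) with hζdef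
  have hζ : IsPrimitiveRoot ζ d := Complex.isPrimitiveRoot_exp d hd0.ne'
  obtain ⟨e, hde0⟩ := hd
  have hde : d = 2*e := by omega
  have he : 0 < e := by omega
  have h0 := zeta_ne hd0 hζ
  have h2d : 0 < 2*d := by omega
  -- conjugation
  have hcz : (starRingEnd ℂ) ζ = ζ⁻¹ := by
    rw [hζdef, ← Complex.exp_conj, ← Complex.exp_neg]
    congr 1
    simp only [map_div₀, map_mul, Complex.conj_I, Complex.conj_ofReal, map_natCast,
      map_ofNat]
    ring
  have hconj : ∀ k : ℕ, (starRingEnd ℂ) (ζ ^ k) = ζ ^ (-(k:ℤ)) := by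
    intro k
    rw [map_pow, hcz, inv_pow, ← zpow_natCast ζ k, ← zpow_neg]
  -- drop the mods in the exponent
  have hmod : ∀ x y : ℕ, (x*y)/(2*d) = ((x % (2*d^2))*y)/(2*d) + d*((x/(2*d^2))*y) := by
    intro x y
    have hxy : x*y = (x % (2*d^2))*y + (2*d)*(d*((x/(2*d^2))*y)) := by
      conv_lhs => rw [← Nat.mod_add_div x (2*d^2)]
      ring
    rw [hxy, Nat.add_mul_div_left _ _ h2d]
  have hBB : ∀ i j : ℕ, ∃ K : ℕ, (i+v)*(j+h)/(2*d)
      = ((i+v) % (2*d^2)) * ((j+h) % (2*d^2)) / (2*d) + d*K := by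
    intro i j
    refine ⟨((i+v)/(2*d^2))*(j+h) + ((j+h)/(2*d^2))*((i+v) % (2*d^2)), ?_⟩
    rw [hmod (i+v) (j+h)]
    rw [Nat.mul_comm ((i+v) % (2*d^2)) (j+h), hmod (j+h) ((i+v) % (2*d^2)),
      Nat.mul_comm ((j+h) % (2*d^2)) ((i+v) % (2*d^2))]
    ring
  have hterm : ∀ i j : ℕ, ζ ^ (i*j/(2*d)) *
      (starRingEnd ℂ) (ζ ^ (((i + v) % (2*d^2)) * ((j + h) % (2*d^2)) / (2*d)))
      = ζ ^ ((↑(i*j/(2*d)) - ↑((i+v)*(j+h)/(2*d))) : ℤ) := by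
    intro i j
    rw [hconj, ← zpow_natCast ζ (i*j/(2*d)), ← zpow_add₀ h0]
    refine zc hd0 hζ _ _ ?_
    obtain ⟨K, hK⟩ := hBB i j
    refine ⟨(K:ℤ), ?_⟩
    rw [hK]
    push_cast [Nat.cast_add]
    ring
  simp only [hterm]
  -- reindex j
  have hj : ∀ i ∈ range (2*d^2),
      (∑ j ∈ range (2*d^2), ζ ^ ((↑(i*j/(2*d)) - ↑((i+v)*(j+h)/(2*d))) : ℤ))
      = ∑ q ∈ range d, (ζ ^ ((-(v:ℤ))*(q:ℤ)) *
          ∑ r ∈ range (2*d), ζ ^ ((↑(i*r/(2*d)) - ↑((i+v)*(r+h)/(2*d))) : ℤ)) := by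
    intro i _
    rw [show range (2*d^2) = range (d*(2*d)) by rw [show 2*d^2 = d*(2*d) by ring]]
    rw [sum_range_mul' d (2*d)]
    refine Finset.sum_congr rfl fun q _ => ?_
    rw [Finset.mul_sum]
    refine Finset.sum_congr rfl fun r _ => ?_
    have e1 : i*(2*d*q+r)/(2*d) = i*r/(2*d) + i*q := by
      rw [show i*(2*d*q+r) = i*r + (2*d)*(i*q) by ring, Nat.add_mul_div_left _ _ h2d]
    have e2 : (i+v)*(2*d*q+r+h)/(2*d) = (i+v)*(r+h)/(2*d) + (i+v)*q := by
      rw [show (i+v)*(2*d*q+r+h) = (i+v)*(r+h) + (2*d)*((i+v)*q) by ring,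
        Nat.add_mul_div_left _ _ h2d]
    rw [e1, e2, ← zpow_add₀ h0]
    congr 1
    simp only [Nat.cast_add, Nat.cast_mul]
    ring
  rw [Finset.sum_congr rfl hj]
  by_cases hdv : (d:ℤ) ∣ (v:ℤ)
  · -- drop the q factor
    obtain ⟨a₀, ha₀⟩ := id hdv
    have drop : ∀ q : ℕ, ζ ^ ((-(v:ℤ))*(q:ℤ)) = 1 := by
      intro q
      rw [show ((-(v:ℤ))*(q:ℤ)) = (d:ℤ) * (-a₀*q) by rw [ha₀]; ring, zpow_mul,
        show (ζ^(d:ℤ)) = 1 by rw [zpow_natCast, hζ.pow_eq_one], one_zpow]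
    simp only [drop, one_mul]
    have hconst : ∀ i ∈ range (2*d^2),
        (∑ _q ∈ range d, ∑ r ∈ range (2*d),
          ζ ^ ((↑(i*r/(2*d)) - ↑((i+v)*(r+h)/(2*d))) : ℤ))
        = d • ∑ r ∈ range (2*d), ζ ^ ((↑(i*r/(2*d)) - ↑((i+v)*(r+h)/(2*d))) : ℤ) := by
      intro i _
      rw [Finset.sum_const, Finset.card_range]
    rw [Finset.sum_congr rfl hconst, ← Finset.smul_sum,
      L3 he hde hζ h v (by rwa [Int.natCast_dvd_natCast] at hdv) hnb, smul_zero]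
  · -- geometric kill in q
    have hz : ∀ i ∈ range (2*d^2),
        (∑ q ∈ range d, (ζ ^ ((-(v:ℤ))*(q:ℤ)) *
          ∑ r ∈ range (2*d), ζ ^ ((↑(i*r/(2*d)) - ↑((i+v)*(r+h)/(2*d))) : ℤ))) = 0 := by
      intro i _
      rw [← Finset.sum_mul, geomζ hd0 hζ (-(v:ℤ)) (by simpa using hdv) d dvd_rfl, zero_mul]
    rw [Finset.sum_congr rfl hz, Finset.sum_const, smul_zero]

end classes
end

section
/- Let d be even and ω = e^{2πi/d}. Define the 4-dimensional array S'[i_0,i_1,i_2,i_3] = ω^{⌊(d·i_0+i_2)(d·i_1+i_3)/(2d)⌋} of size 2d × 2d × d × d. Then any two distinct 2-dimensional subarrays obtained by fixing (i_2,i_3) ≠ (i'_2,i'_3) (with 0 ≤ i_2,i_3,i'_2,i'_3 < d, i_2 ≠ i'_2 and i_3 ≠ i'_3) are orthogonal: for all shifts (v,h), Σ_{i_0=0}^{2d-1} Σ_{i_1=0}^{2d-1} S'[i_0,i_1,i_2,i_3] · conj(S'[i_0+v, i_1+h, i'_2, i'_3]) = 0, indices mod 2d. -/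
open Finset Complex ComplexConjugate

/-! For fixed `i₀` the inner sum over `i₁` already vanishes. Write `A = d i₀ + i₂` and
`A' = d i₀' + i₂'`. The row `j ↦ ω ^ ⌊A (d j + s) / (2d)⌋` is multiplied by `ω ^ A` when `j`
grows by 2, so it is `2d`-periodic (as `ω ^ d = 1`) and the reduction mod `2d` can be dropped.
Hence the summand is multiplied by `z = ω ^ A · conj (ω ^ A')` when `i₁` grows by 2. Since
`A ≡ i₂` and `A' ≡ i₂' (mod d)`, `z` is a `d`-th root of unity other than 1, and summing such a
sequence over `2d` consecutive indices gives 0. -/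

theorem apply_add_mul_eq_pow_mul {M : Type*} [Monoid M] {T : ℕ → M} {z : M} {m : ℕ}
    (hT : ∀ i, T (i + m) = z * T i) (i k : ℕ) : T (i + m * k) = z ^ k * T i := by
  induction k with
  | zero => simp
  | succ k ih => rw [mul_add_one, ← add_assoc, hT, ih, pow_succ', mul_assoc]

theorem sum_range_mul_eq_zero_of_apply_add_eq_mul {R : Type*} [CommRing R] [NoZeroDivisors R]
    {T : ℕ → R} {z : R} {m n : ℕ} (hT : ∀ i, T (i + m) = z * T i) (hz : z ≠ 1)
    (hzn : z ^ n = 1) : ∑ i ∈ range (m * n), T i = 0 := by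
  -- `T` is `m n`-periodic, so shifting the range of summation by `m` changes nothing.
  have hshift : ∑ i ∈ range (m * n), T (i + m) = ∑ i ∈ range (m * n), T i := by
    have h := sum_range_add T m (m * n)
    rw [add_comm m, sum_range_add T (m * n) m] at h
    simp only [add_comm m, fun i => add_comm (m * n) i, apply_add_mul_eq_pow_mul hT, hzn,
      one_mul] at h
    rw [add_comm] at h
    exact (add_left_cancel h).symm
  have hz_fix : (z - 1) * ∑ i ∈ range (m * n), T i = 0 := by
    rw [sub_one_mul, mul_sum, ← sum_congr rfl fun i _ => hT i, hshift, sub_self]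
  exact (mul_eq_zero.mp hz_fix).resolve_left (sub_ne_zero.mpr hz)

section FloorChirp

variable {M : Type*} [Monoid M]

/-- `floorChirp ω 2 d (d * i₀ + i₂) i₃` is the row `i₁ ↦ S'[i₀, i₁, i₂, i₃]`. -/
def floorChirp (ω : M) (m n A s j : ℕ) : M := ω ^ (A * (n * j + s) / (m * n))

theorem floorChirp_add (ω : M) {m n : ℕ} (hmn : 0 < m * n) (A s j : ℕ) :
    floorChirp ω m n A s (j + m) = ω ^ A * floorChirp ω m n A s j := by
  rw [floorChirp, floorChirp, ← pow_add, add_comm A,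
    show A * (n * (j + m) + s) = A * (n * j + s) + A * (m * n) by ring,
    Nat.add_mul_div_right _ _ hmn]

theorem floorChirp_mod (ω : M) {m n : ℕ} (hω : ω ^ n = 1) (hmn : 0 < m * n) (A s j : ℕ) :
    floorChirp ω m n A s (j % (m * n)) = floorChirp ω m n A s j := by
  conv_rhs => rw [← Nat.mod_add_div j (m * n), mul_assoc,
    apply_add_mul_eq_pow_mul (floorChirp_add ω hmn A s), pow_mul, ← pow_mul ω A n, mul_comm A n,
    pow_mul, hω, one_pow, one_pow, one_mul]

end FloorChirp

theorem IsPrimitiveRoot.pow_mul_conj_pow_ne_one {ζ : ℂ} {n : ℕ} (hζ : IsPrimitiveRoot ζ n)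
    (hn : n ≠ 0) {a b : ℕ} (hab : a % n ≠ b % n) : ζ ^ a * conj (ζ ^ b) ≠ 1 := by
  rw [← inv_eq_conj (by rw [norm_pow, hζ.norm'_eq_one hn, one_pow]), ne_eq,
    mul_inv_eq_one₀ (pow_ne_zero _ (hζ.ne_zero hn))]
  rw [hζ.eq_orderOf] at hab
  exact mt (hζ.isOfFinOrder hn).pow_inj_mod.mp hab

theorem IsPrimitiveRoot.pow_mul_conj_pow_pow_eq_one {ζ : ℂ} {n : ℕ} (hζ : IsPrimitiveRoot ζ n)
    (a b : ℕ) : (ζ ^ a * conj (ζ ^ b)) ^ n = 1 := by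
  rw [mul_pow, ← map_pow, ← pow_mul, ← pow_mul, mul_comm a, mul_comm b, pow_mul, pow_mul,
    hζ.pow_eq_one, one_pow, one_pow, map_one, mul_one]

theorem constructionII_subarrays_orthogonal_general (d : ℕ)
    (i2 i3 i2' i3' : ℕ) (h2 : i2 < d) (h2' : i2' < d)
    (hne2 : i2 ≠ i2') (v h : ℕ) :
    ∑ i0 ∈ range (2 * d), ∑ i1 ∈ range (2 * d),
      Complex.exp (2 * Real.pi * Complex.I / d) ^
          ((d * i0 + i2) * (d * i1 + i3) / (2 * d)) *
        (starRingEnd ℂ) (Complex.exp (2 * Real.pi * Complex.I / d) ^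
          ((d * ((i0 + v) % (2 * d)) + i2') * (d * ((i1 + h) % (2 * d)) + i3') / (2 * d))) = 0 := by
  have hd : 0 < 2 * d := by omega
  set ω := exp (2 * Real.pi * I / d)
  have hω : IsPrimitiveRoot ω d := isPrimitiveRoot_exp d (by omega)
  refine sum_eq_zero fun i0 _ => ?_
  set A := d * i0 + i2
  set A' := d * ((i0 + v) % (2 * d)) + i2'
  have hA : A % d ≠ A' % d := by
    simpa [A, A', Nat.mul_add_mod, Nat.mod_eq_of_lt h2, Nat.mod_eq_of_lt h2'] using hne2
  calc _ = ∑ i1 ∈ range (2 * d),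
        floorChirp ω 2 d A i3 i1 * conj (floorChirp ω 2 d A' i3' (i1 + h)) :=
        sum_congr rfl fun i1 _ => by
          rw [← floorChirp_mod ω hω.pow_eq_one hd A' i3' (i1 + h)]; rfl
    _ = 0 := by
      refine sum_range_mul_eq_zero_of_apply_add_eq_mul (fun i1 => ?_)
        (hω.pow_mul_conj_pow_ne_one (by omega) hA) (hω.pow_mul_conj_pow_pow_eq_one A A')
      rw [add_right_comm, floorChirp_add ω hd, floorChirp_add ω hd, map_mul]
      ring

/-- Condition 1 of the GAOP for Construction II: distinct 2-dimensional subarrays of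
the 4-dimensional array `S'[i₀,i₁,i₂,i₃] = ω^{⌊(d·i₀+i₂)(d·i₁+i₃)/(2d)⌋}` (of size
`2d × 2d × d × d`, `d` even) are orthogonal. -/
theorem constructionII_subarrays_orthogonal (d : ℕ) (hd : Even d) (hd0 : 0 < d)
    (i2 i3 i2' i3' : ℕ) (h2 : i2 < d) (h3 : i3 < d) (h2' : i2' < d) (h3' : i3' < d)
    (hne2 : i2 ≠ i2') (hne3 : i3 ≠ i3') (v h : ℕ) :
    ∑ i0 ∈ range (2 * d), ∑ i1 ∈ range (2 * d),
      Complex.exp (2 * Real.pi * Complex.I / d) ^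
          ((d * i0 + i2) * (d * i1 + i3) / (2 * d)) *
        (starRingEnd ℂ) (Complex.exp (2 * Real.pi * Complex.I / d) ^
          ((d * ((i0 + v) % (2 * d)) + i2') * (d * ((i1 + h) % (2 * d)) + i3') / (2 * d))) = 0 :=
  constructionII_subarrays_orthogonal_general d i2 i3 i2' i3' h2 h2' hne2 v h
end

section
/- Let r be even, k ≥ 1, p coprime to r^{k+1}, and set ω = e^{2πi/r^{k+1}} and u_n = e^{πi·p·n²/r}. For any s with 0 ≤ s < r^{k+1} and any integers a ≠ b with 0 ≤ a, b < r^k: Σ_{i=0}^{r^{k+1}-1} u_i · conj(u_{i+s}) · ω^{(a - b)·i} = 0, where the index i+s is taken mod r^{k+1}. -/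
/-!
Writing `u_n = e^{πi p n²/r}`, one has `u_i · conj(u_{i+s}) = conj(u_s) · e^{-2πi p s i/r}`, and
`e^{2πi/r} = ω^{r^k}`, so the `i`-th term is `conj(u_s) · (ω^m)^i` with `m = a - b - p s r^k`.
Since `r^k ∤ a - b`, `ω^m` is an `r^{k+1}`-th root of unity different from `1`, and the geometric
sum vanishes. Reducing `i + s` modulo `r^{k+1}` is harmless: for even `r`, `u` has period `r`.
-/

open Finset Complex ComplexConjugate
open scoped Real

theorem IsPrimitiveRoot.geom_sum_zpow_eq_zero {K : Type*} [Field K] {ζ : K} {N : ℕ}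
    (hζ : IsPrimitiveRoot ζ N) {m : ℤ} (hm : ¬ (N : ℤ) ∣ m) :
    ∑ i ∈ range N, (ζ ^ m) ^ i = 0 := by
  have hne : ζ ^ m ≠ 1 := by rwa [Ne, hζ.zpow_eq_one_iff_dvd]
  have hpow : (ζ ^ m) ^ N = 1 := by
    rw [← zpow_natCast, ← zpow_mul, mul_comm, zpow_mul, zpow_natCast, hζ.pow_eq_one, one_zpow]
  rw [geom_sum_eq hne, hpow, sub_self, zero_div]

theorem Int.not_natCast_dvd_sub_of_lt {a b n : ℕ} (ha : a < n) (hb : b < n) (hab : a ≠ b) :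
    ¬ (n : ℤ) ∣ a - b := fun h => hab ((Nat.modEq_iff_dvd.2 h).symm.eq_of_lt_of_lt ha hb)

theorem exp_two_pi_I_div_mul_pow {n m : ℕ} (hm : m ≠ 0) :
    exp (2 * π * I / (n * m : ℕ)) ^ m = exp (2 * π * I / n) := by
  rw [← exp_nat_mul]
  congr 1
  push_cast
  field_simp

noncomputable def chu (r p n : ℕ) : ℂ := exp (π * I * p * (n : ℂ) ^ 2 / r)

theorem chu_eq_of_two_mul_dvd_sq_sub_sq {r p x y : ℕ} (h : 2 * (r : ℤ) ∣ x ^ 2 - y ^ 2) :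
    chu r p x = chu r p y := by
  obtain rfl | hr := eq_or_ne r 0
  · simp [chu]
  obtain ⟨c, hc⟩ := h
  have hcC : (x : ℂ) ^ 2 = (y : ℂ) ^ 2 + 2 * r * c := by
    rw [sub_eq_iff_eq_add'] at hc
    exact_mod_cast congrArg (Int.cast : ℤ → ℂ) hc
  refine exp_eq_exp_iff_exists_int.2 ⟨p * c, ?_⟩
  rw [hcC]
  push_cast
  field_simp

theorem chu_eq_of_modEq {r p x y : ℕ} (hr : Even r) (h : x ≡ y [MOD r]) :
    chu r p x = chu r p y := by
  apply chu_eq_of_two_mul_dvd_sq_sub_sq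
  obtain ⟨t, ht⟩ := (Nat.modEq_iff_dvd.1 h.symm)
  obtain ⟨q, rfl⟩ := hr
  -- with `x - y = r t` and `r = 2q`: `x² - y² = r t (r t + 2y) = 2r · t (q t + y)`
  refine ⟨t * (q * t + y), ?_⟩
  push_cast at ht ⊢
  linear_combination (x + y + 2 * q * t : ℤ) * ht

theorem chu_mul_conj_chu_add (r p n s : ℕ) :
    chu r p n * conj (chu r p (n + s)) =
      conj (chu r p s) * exp (2 * π * I / r) ^ (-(p * s * n : ℤ)) := by
  obtain rfl | hr := eq_or_ne r 0
  · simp [chu]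
  simp only [chu, ← exp_conj, ← exp_int_mul, ← exp_add, map_div₀, map_mul, map_pow, conj_I,
    conj_ofReal, map_natCast]
  congr 1
  push_cast
  field_simp
  ring

theorem chu_twisted_correlation_vanishes_general (r k p : ℕ) (hr : Even r)
    (s a b : ℕ) (ha : a < r ^ k) (hb : b < r ^ k) (hab : a ≠ b) :
    ∑ i ∈ range (r ^ (k + 1)),
      Complex.exp (Real.pi * Complex.I * p * (i : ℂ) ^ 2 / r) *
        (starRingEnd ℂ) (Complex.exp
          (Real.pi * Complex.I * p * (((i + s) % r ^ (k + 1) : ℕ) : ℂ) ^ 2 / r)) *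
        Complex.exp (2 * Real.pi * Complex.I / (r ^ (k + 1) : ℕ)) ^
          (((a : ℤ) - (b : ℤ)) * (i : ℤ)) = 0 := by
  obtain rfl | hr0 := eq_or_ne r 0
  · simp
  set ω := exp (2 * π * I / (r ^ (k + 1) : ℕ))
  have hω : IsPrimitiveRoot ω (r ^ (k + 1)) := isPrimitiveRoot_exp _ (pow_ne_zero _ hr0)
  have hω_pow : ω ^ r ^ k = exp (2 * π * I / r) := by
    simp only [ω, pow_succ']
    exact exp_two_pi_I_div_mul_pow (pow_ne_zero _ hr0)
  set m : ℤ := (a - b) - p * s * r ^ k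
  have hm : ¬ ((r ^ (k + 1) : ℕ) : ℤ) ∣ m := by
    intro h
    apply Int.not_natCast_dvd_sub_of_lt ha hb hab
    have hrk : ((r ^ k : ℕ) : ℤ) ∣ m :=
      (Int.natCast_dvd_natCast.2 (pow_dvd_pow r k.le_succ)).trans h
    simpa [m] using hrk.add (dvd_mul_left ((r ^ k : ℕ) : ℤ) (p * s))
  calc _ = ∑ i ∈ range (r ^ (k + 1)), conj (chu r p s) * (ω ^ m) ^ i := by
        refine sum_congr rfl fun i _ => ?_
        change chu r p i * conj (chu r p ((i + s) % _)) * _ = _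
        rw [chu_eq_of_modEq hr ((Nat.mod_modEq _ _).of_dvd (dvd_pow_self r k.succ_ne_zero)),
          chu_mul_conj_chu_add, ← hω_pow, mul_assoc, ← zpow_natCast, ← zpow_mul,
          ← zpow_add₀ (exp_ne_zero _), ← zpow_natCast, ← zpow_mul]
        congr 2
        push_cast [m]
        ring
    _ = 0 := by rw [← mul_sum, hω.geom_sum_zpow_eq_zero hm, mul_zero]

/-- Key Gaussian-sum lemma for the generalized Milewski construction: for `r` even,
`u_n = e^{πi·p·n²/r}` a Chu sequence of length `r^{k+1}` and `ω = e^{2πi/r^{k+1}}`,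
the shifted Chu correlation twisted by the character `ω^{(a-b)i}` vanishes for
`a ≠ b` with `0 ≤ a, b < r^k`. -/
theorem chu_twisted_correlation_vanishes (r k p : ℕ) (hr : Even r) (hr0 : 0 < r)
    (hk : 1 ≤ k) (hp : Nat.Coprime p (r ^ (k + 1)))
    (s a b : ℕ) (hs : s < r ^ (k + 1)) (ha : a < r ^ k) (hb : b < r ^ k) (hab : a ≠ b) :
    ∑ i ∈ range (r ^ (k + 1)),
      Complex.exp (Real.pi * Complex.I * p * (i : ℂ) ^ 2 / r) *
        (starRingEnd ℂ) (Complex.exp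
          (Real.pi * Complex.I * p * (((i + s) % r ^ (k + 1) : ℕ) : ℂ) ^ 2 / r)) *
        Complex.exp (2 * Real.pi * Complex.I / (r ^ (k + 1) : ℕ)) ^
          (((a : ℤ) - (b : ℤ)) * (i : ℤ)) = 0 :=
  chu_twisted_correlation_vanishes_general r k p hr s a b ha hb hab
end

section
/- Let r be even, k ≥ 0, p coprime to r, and u_n = e^{πi·p·n²/r} the Chu sequence of length r (extended periodically). For any shift s with s ≢ 0 mod r, the periodic autocorrelation of u over one period of length r vanishes: Σ_{n=0}^{r-1} u_n · conj(u_{n+s}) = 0. -/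
/-!
With `η = e^{πi/r}`, a primitive `2r`-th root of unity, `u_n = η^(p n²)`. Since `r` is even,
`(n mod r)² ≡ n² (mod 2r)`, so the reduction of `n + s` mod `r` can be dropped, and then
`u_n · conj u_{n+s} = η^(-p s²) · w^n` with `w = η^(-2ps)`. This `w` is an `r`-th root of unity,
and `w ≠ 1` because `r ∤ p s`; so the autocorrelation is a multiple of a vanishing geometric sum.
-/

open Finset Complex

theorem geom_sum_eq_zero_of_pow_eq_one {K : Type*} [DivisionRing K] {w : K} {r : ℕ}
    (hw : w ≠ 1) (hwr : w ^ r = 1) : ∑ i ∈ range r, w ^ i = 0 := by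
  rw [geom_sum_eq hw, hwr, sub_self, zero_div]

theorem Nat.mod_sq_modEq_sq_of_even {r : ℕ} (hr : Even r) (m : ℕ) :
    (m % r) ^ 2 ≡ m ^ 2 [MOD 2 * r] := by
  obtain ⟨t, rfl⟩ := hr
  have hm : m ^ 2 = (m % (t + t)) ^ 2 +
      2 * (t + t) * (m / (t + t) * (m % (t + t) + t * (m / (t + t)))) := by
    conv_lhs => rw [← Nat.mod_add_div m (t + t)]
    ring
  rw [hm]
  unfold Nat.ModEq
  rw [Nat.add_mul_mod_self_left]

namespace IsPrimitiveRoot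

variable {K : Type*} [Field K] {η : K} {r : ℕ}

theorem pow_mul_mod_sq_eq (hη : IsPrimitiveRoot η (2 * r)) (hr : Even r) (p m : ℕ) :
    η ^ (p * (m % r) ^ 2) = η ^ (p * m ^ 2) := by
  rw [← pow_mod_orderOf, ← hη.eq_orderOf, (Nat.mod_sq_modEq_sq_of_even hr m).mul_left p,
    hη.eq_orderOf, pow_mod_orderOf]

theorem chu_autocorrelation_eq_zero (hη : IsPrimitiveRoot η (2 * r)) (hr0 : r ≠ 0) (hr : Even r)
    {p s : ℕ} (hp : p.Coprime r) (hs : ¬ r ∣ s) :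
    ∑ n ∈ range r, η ^ (p * n ^ 2) * (η ^ (p * ((n + s) % r) ^ 2))⁻¹ = 0 := by
  have hη0 : η ≠ 0 := hη.ne_zero (by omega)
  set w := η ^ (2 * p * s)
  have hterm (n : ℕ) : η ^ (p * n ^ 2) * (η ^ (p * ((n + s) % r) ^ 2))⁻¹ =
      (η ^ (p * s ^ 2))⁻¹ * w⁻¹ ^ n := by
    have hexp : η ^ (p * (n + s) ^ 2) = η ^ (p * n ^ 2) * η ^ (p * s ^ 2) * w ^ n := by
      rw [← pow_mul, ← pow_add, ← pow_add]
      ring_nf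
    rw [hη.pow_mul_mod_sq_eq hr, hexp, inv_pow]
    field_simp
  have hw : w ≠ 1 := by
    rw [Ne, hη.pow_eq_one_iff_dvd, mul_assoc, Nat.mul_dvd_mul_iff_left two_pos]
    exact fun h => hs (hp.symm.dvd_of_dvd_mul_left h)
  have hwr : w ^ r = 1 := by
    rw [← pow_mul, hη.pow_eq_one_iff_dvd]
    exact ⟨p * s, by ring⟩
  rw [sum_congr rfl fun n _ => hterm n, ← mul_sum,
    geom_sum_eq_zero_of_pow_eq_one (inv_ne_one.mpr hw) (by rw [inv_pow, hwr, inv_one]), mul_zero]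

end IsPrimitiveRoot

/-- The Chu sequence `u_n = e^{πi·p·n²/r}` of length `r` (`r` even, `p` coprime to `r`)
is perfect: its periodic autocorrelation vanishes at every off-peak shift. -/
theorem chu_sequence_perfect (r p : ℕ) (hr : Even r) (hr0 : 0 < r)
    (hp : Nat.Coprime p r) (s : ℕ) (hs : ¬ r ∣ s) :
    ∑ n ∈ range r,
      Complex.exp (Real.pi * Complex.I * p * (n : ℂ) ^ 2 / r) *
        (starRingEnd ℂ) (Complex.exp
          (Real.pi * Complex.I * p * (((n + s) % r : ℕ) : ℂ) ^ 2 / r)) = 0 := by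
  set η := Complex.exp (Real.pi * Complex.I / r)
  have hη : IsPrimitiveRoot η (2 * r) := by
    convert Complex.isPrimitiveRoot_exp (2 * r) (by omega) using 2
    push_cast
    field_simp
  have hchu (m : ℕ) :
      Complex.exp (Real.pi * Complex.I * p * (m : ℂ) ^ 2 / r) = η ^ (p * m ^ 2) := by
    rw [← Complex.exp_nat_mul]
    push_cast
    ring_nf
  have hconj (k : ℕ) : (starRingEnd ℂ) (η ^ k) = (η ^ k)⁻¹ :=
    (Complex.inv_eq_conj (by rw [norm_pow, hη.norm'_eq_one (by omega), one_pow])).symm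
  simp only [hchu, hconj]
  exact hη.chu_autocorrelation_eq_zero hr0.ne' hr hp hs
end

section
/- If an N-dimensional array A has the Generalized Array Orthogonality Property for divisor d, then the associated 2N-dimensional array A' is itself a perfect array: all off-peak periodic autocorrelations of A' vanish. -/
open Finset Complex

/-- Corollary 4.3: if an `N`-dimensional array `A` has the GAOP for divisor `d`, then
the associated `2N`-dimensional array `A'[q,r] = A[q·d + r]` (of size
`(m_0/d) × ⋯ × (m_{N-1}/d) × d × ⋯ × d`) is itself perfect. -/
theorem gaop_associated_array_perfect (N d : ℕ) (hd : 0 < d) (m : Fin N → ℕ)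
    (hm : ∀ k, 0 < m k) (hdvd : ∀ k, d ∣ m k) (A : (Fin N → ℕ) → ℂ)
    (h1 : ∀ r r' : Fin N → ℕ, (∀ k, r k < d) → (∀ k, r' k < d) → r ≠ r' →
      ∀ s : Fin N → ℕ,
        ∑ q ∈ Fintype.piFinset (fun k => range (m k / d)),
          A (fun k => q k * d + r k) *
            (starRingEnd ℂ) (A (fun k => ((q k + s k) % (m k / d)) * d + r' k)) = 0)
    (h2 : ∀ s : Fin N → ℕ, (¬ ∀ k, (m k / d) ∣ s k) →
      ∑ r ∈ Fintype.piFinset (fun _ : Fin N => range d),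
        ∑ q ∈ Fintype.piFinset (fun k => range (m k / d)),
          A (fun k => q k * d + r k) *
            (starRingEnd ℂ) (A (fun k => ((q k + s k) % (m k / d)) * d + r k)) = 0) :
    ∀ σ ρ : Fin N → ℕ, ¬ ((∀ k, (m k / d) ∣ σ k) ∧ (∀ k, d ∣ ρ k)) →
      ∑ q ∈ Fintype.piFinset (fun k => range (m k / d)),
        ∑ r ∈ Fintype.piFinset (fun _ : Fin N => range d),
          A (fun k => q k * d + r k) *
            (starRingEnd ℂ)
              (A (fun k => ((q k + σ k) % (m k / d)) * d + ((r k + ρ k) % d))) = 0 := by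
  intro σ ρ h
  rw [Finset.sum_comm]
  by_cases hρ : ∀ k, d ∣ ρ k
  · have hσ : ¬ ∀ k, (m k / d) ∣ σ k := fun h' => h ⟨h', hρ⟩
    have := h2 σ hσ
    rw [← this]
    apply Finset.sum_congr rfl
    intro r hr
    have hrlt : ∀ k, r k < d := by
      rw [Fintype.mem_piFinset] at hr
      intro k; simpa using hr k
    apply Finset.sum_congr rfl
    intro q _
    have hfun : (fun k => (q k + σ k) % (m k / d) * d + (r k + ρ k) % d)
        = fun k => (q k + σ k) % (m k / d) * d + r k := by
      funext k
      obtain ⟨c, hc⟩ := hρ k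
      rw [hc, Nat.add_mul_mod_self_left, Nat.mod_eq_of_lt (hrlt k)]
    rw [hfun]
  · push_neg at hρ
    obtain ⟨k0, hk0⟩ := hρ
    apply Finset.sum_eq_zero
    intro r hr
    have hrlt : ∀ k, r k < d := by
      rw [Fintype.mem_piFinset] at hr
      intro k; simpa using hr k
    have hr'lt : ∀ k, (r k + ρ k) % d < d := fun k => Nat.mod_lt _ hd
    have hne : r ≠ fun k => (r k + ρ k) % d := by
      intro he
      apply hk0
      have he0 := congrFun he k0
      have : (r k0 + ρ k0) % d = (r k0 + 0) % d := by
        rw [Nat.add_zero, Nat.mod_eq_of_lt (hrlt k0), ← he0]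
      have := Nat.ModEq.add_left_cancel' (r k0) this.symm
      exact (Nat.modEq_zero_iff_dvd).mp this.symm
    exact h1 r (fun k => (r k + ρ k) % d) hrlt hr'lt hne σ
end

section
/- Let n ≥ 2 and ω = e^{2πi/n}. For any integers τ, q', r' with τ = q'·n + r', 0 ≤ r' < n, and τ ≢ 0 mod n², the autocorrelation of the Frank sequence decomposes as θ_s(τ) = Σ_{r=0}^{n-1} θ_{S[r], S[(r+r') mod n]}(q' + ⌊(r+r')/n⌋), where s_{qn+r} = ω^{qr}, S[r] is the column sequence q ↦ ω^{qr} of length n, and θ denotes periodic cross-correlation of length-n sequences. -/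
open Finset Complex

/-- The key decomposition in the proof that the AOP implies perfection, for the Frank
sequence `s_{qn+r} = ω^{qr}`: writing the shift `τ = q'·n + r'` with `r' < n`, the
length-`n²` autocorrelation of `s` decomposes as a sum over `r` of column
cross-correlations `θ_{S[r],S[(r+r') mod n]}(q' + ⌊(r+r')/n⌋)`. -/
theorem frank_autocorrelation_decomposition (n : ℕ) (hn : 2 ≤ n)
    (τ q' r' : ℕ) (hτ : τ = q' * n + r') (hr' : r' < n) (hoff : ¬ n ^ 2 ∣ τ) :
    ∑ k ∈ range (n ^ 2),
      Complex.exp (2 * Real.pi * Complex.I / n) ^ ((k / n) * (k % n)) *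
        (starRingEnd ℂ) (Complex.exp (2 * Real.pi * Complex.I / n) ^
          ((((k + τ) % n ^ 2) / n) * (((k + τ) % n ^ 2) % n))) =
    ∑ r ∈ range n, ∑ q ∈ range n,
      Complex.exp (2 * Real.pi * Complex.I / n) ^ (q * r) *
        (starRingEnd ℂ) (Complex.exp (2 * Real.pi * Complex.I / n) ^
          (((q + (q' + (r + r') / n)) % n) * ((r + r') % n))) := by
  have hn0 : 0 < n := by omega
  rw [← Finset.sum_product']
  refine Finset.sum_nbij' (fun k => (k % n, k / n)) (fun p => p.2 * n + p.1) ?_ ?_ ?_ ?_ ?_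
  · intro k hk
    simp only [Finset.mem_range, Finset.mem_product] at *
    rw [sq] at hk
    exact ⟨Nat.mod_lt _ hn0, (Nat.div_lt_iff_lt_mul hn0).2 hk⟩
  · rintro ⟨r, q⟩ hp
    simp only [Finset.mem_range, Finset.mem_product] at *
    rw [sq]
    nlinarith [hp.1, hp.2]
  · intro k hk
    exact Nat.div_add_mod' k n
  · rintro ⟨r, q⟩ hp
    simp only [Finset.mem_range, Finset.mem_product] at hp
    simp only [Prod.mk.injEq]
    constructor
    · rw [Nat.mul_add_mod', Nat.mod_eq_of_lt hp.1]
    · rw [mul_comm, Nat.mul_add_div hn0, Nat.div_eq_of_lt hp.1, add_zero]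
  · intro k hk
    set a := k % n with ha
    set b := k / n with hb
    have h1 : (k + τ) % n ^ 2 / n = (b + q' + (a + r') / n) % n := by
      rw [sq, Nat.mod_mul_right_div_self]
      have : k + τ = (a + r') + (b + q') * n := by
        rw [hτ, ha, hb]; have := Nat.div_add_mod k n; ring_nf; omega
      rw [this, Nat.add_mul_div_right _ _ hn0,
        Nat.add_comm ((a + r') / n) (b + q')]
    have h2 : (k + τ) % n ^ 2 % n = (a + r') % n := by
      rw [sq, Nat.mod_mod_of_dvd _ (dvd_mul_left n n), hτ]
      rw [show k + (q' * n + r') = k + r' + q' * n by ring,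
        Nat.add_mul_mod_self_right, ha, Nat.mod_add_mod]
    rw [h1, h2]
    rw [add_assoc]
end
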